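/- arXiv:2511.09963 — 5 statements merged into one kernel-verified Lean document; each statement's English description precedes it below -/
import Mathlib

section
/- (Continuity of the renewal kernel integral.) Let w : [0,∞) → [0,∞) and β : [0,∞) → [0,∞) be bounded continuous functions and let f₀ ∈ C⁰([0,∞)) ∩ L¹([0,∞)). Then the function ḡ(t) = ∫_t^∞ w(a)·f₀(a−t)·exp(−∫_{a−t}^a β(s) ds) da is continuous on [0,∞). -/
open MeasureTheory Set Filter

lemma renewal_integral_Ioi_comp_add (f : ℝ → ℝ) (t : ℝ) :
    ∫ a in Ioi t, f a = ∫ x in Ioi 0, f (x + t) := by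
  rw [← integral_indicator measurableSet_Ioi, ← integral_indicator measurableSet_Ioi,
      ← integral_add_right_eq_self (Set.indicator (Ioi t) f) t]
  congr 1
  ext x
  by_cases hx : 0 < x
  · rw [Set.indicator_of_mem (by simpa using hx), Set.indicator_of_mem (by simpa using hx)]
  · rw [Set.indicator_of_notMem (by simpa using hx), Set.indicator_of_notMem (by simpa using hx)]

/-- **Continuity of the renewal kernel integral.** For bounded continuous
`w, β : [0,∞) → [0,∞)` and `f₀ ∈ C⁰([0,∞)) ∩ L¹([0,∞))`, the function
`ḡ(t) = ∫_t^∞ w(a)·f₀(a−t)·exp(−∫_{a−t}^a β(s) ds) da` is continuous on `[0,∞)`. -/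
theorem continuity_of_renewal_kernel_integral
    (w β f₀ : ℝ → ℝ)
    (hwc : ContinuousOn w (Ici 0)) (hwn : ∀ a, 0 ≤ a → 0 ≤ w a)
    (hwb : ∃ C, ∀ a, 0 ≤ a → w a ≤ C)
    (hβc : ContinuousOn β (Ici 0)) (hβn : ∀ a, 0 ≤ a → 0 ≤ β a)
    (hβb : ∃ C, ∀ a, 0 ≤ a → β a ≤ C)
    (hf₀c : ContinuousOn f₀ (Ici 0)) (hf₀i : IntegrableOn f₀ (Ioi 0)) :
    ContinuousOn
      (fun t => ∫ a in Ioi t, w a * f₀ (a - t) * Real.exp (-(∫ s in (a - t)..a, β s)))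
      (Ici 0) := by
  obtain ⟨Cw, hCw⟩ := hwb
  -- continuous extensions to all of ℝ
  set W : ℝ → ℝ := fun a => w (max a 0) with hW_def
  set B : ℝ → ℝ := fun a => β (max a 0) with hB_def
  set F0 : ℝ → ℝ := fun a => f₀ (max a 0) with hF0_def
  have hmax : Continuous fun a : ℝ => max a 0 := continuous_id.max continuous_const
  have hWc : Continuous W := hwc.comp_continuous hmax (fun x => mem_Ici.mpr (le_max_right _ _))
  have hBc : Continuous B := hβc.comp_continuous hmax (fun x => mem_Ici.mpr (le_max_right _ _))
  have hF0c : Continuous F0 := hf₀c.comp_continuous hmax (fun x => mem_Ici.mpr (le_max_right _ _))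
  have hBnn : ∀ s, 0 ≤ B s := fun s => hβn _ (le_max_right _ _)
  have hWnn : ∀ s, 0 ≤ W s := fun s => hwn _ (le_max_right _ _)
  have hWb : ∀ s, W s ≤ Cw := fun s => hCw _ (le_max_right _ _)
  -- primitive of B
  set P : ℝ → ℝ := fun y => ∫ s in (0:ℝ)..y, B s with hP_def
  have hBint : ∀ a b : ℝ, IntervalIntegrable B volume a b := fun a b =>
    hBc.intervalIntegrable a b
  have hPc : Continuous P := intervalIntegral.continuous_primitive hBint 0
  have hPsub : ∀ a b : ℝ, P b - P a = ∫ s in a..b, B s := fun a b =>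
    intervalIntegral.integral_interval_sub_left (hBint 0 b) (hBint 0 a)
  -- target expressed with extensions and primitive
  set F : ℝ → ℝ → ℝ := fun t x => W (x + t) * F0 x * Real.exp (-(P (x + t) - P x))
    with hF_def
  have key : ∀ t ∈ Ici (0:ℝ),
      (∫ a in Ioi t, w a * f₀ (a - t) * Real.exp (-(∫ s in (a - t)..a, β s)))
        = ∫ x in Ioi 0, F t x := by
    intro t ht
    have h1 : (∫ a in Ioi t, w a * f₀ (a - t) * Real.exp (-(∫ s in (a - t)..a, β s)))
        = ∫ a in Ioi t, W a * F0 (a - t) * Real.exp (-(P a - P (a - t))) := by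
      refine setIntegral_congr_fun measurableSet_Ioi ?_
      intro a ha
      have hta : t < a := ha
      have h0t : (0:ℝ) ≤ t := ht
      have h0a : (0:ℝ) ≤ a := le_of_lt (lt_of_le_of_lt h0t hta)
      have h0at : (0:ℝ) ≤ a - t := by linarith
      have e1 : W a = w a := by simp [hW_def, max_eq_left h0a]
      have e2 : F0 (a - t) = f₀ (a - t) := by simp [hF0_def, max_eq_left h0at]
      have e3 : P a - P (a - t) = ∫ s in (a - t)..a, β s := by
        rw [hPsub]
        refine intervalIntegral.integral_congr ?_
        intro s hs
        rw [uIcc_of_le (by linarith)] at hs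
        have : (0:ℝ) ≤ s := le_trans h0at hs.1
        simp [hB_def, max_eq_left this]
      simp only [e1, e2, e3]
    rw [h1, renewal_integral_Ioi_comp_add]
    refine setIntegral_congr_fun measurableSet_Ioi ?_
    intro x _
    simp [hF_def, add_sub_cancel_right]
  refine ContinuousOn.congr ?_ key
  -- dominated convergence
  have hF0i : IntegrableOn F0 (Ioi 0) := by
    refine hf₀i.congr_fun ?_ measurableSet_Ioi
    intro x hx
    simp [hF0_def, max_eq_left (le_of_lt (mem_Ioi.mp hx))]
  refine continuousOn_of_dominated
    (bound := fun x => Cw * |F0 x|) ?_ ?_ ?_ ?_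
  · intro t _
    exact ((hWc.comp (continuous_id.add continuous_const)).mul hF0c |>.mul
      (((hPc.comp (continuous_id.add continuous_const)).sub hPc).neg.rexp)).aestronglyMeasurable
  · intro t ht
    refine Eventually.of_forall fun x => ?_
    have hWx : 0 ≤ W (x + t) := hWnn _
    have hWx2 : W (x + t) ≤ Cw := hWb _
    have hint : (0:ℝ) ≤ P (x + t) - P x := by
      rw [hPsub]
      exact intervalIntegral.integral_nonneg (by linarith [mem_Ici.mp ht]) fun s _ => hBnn s
    have hexp : Real.exp (-(P (x + t) - P x)) ≤ 1 := by
      rw [Real.exp_le_one_iff]; linarith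
    have hexp0 : 0 < Real.exp (-(P (x + t) - P x)) := Real.exp_pos _
    have : ‖F t x‖ = W (x + t) * |F0 x| * Real.exp (-(P (x + t) - P x)) := by
      simp only [hF_def, Real.norm_eq_abs, abs_mul, abs_of_nonneg hWx, abs_of_pos hexp0]
    rw [this]
    calc W (x + t) * |F0 x| * Real.exp (-(P (x + t) - P x))
        ≤ W (x + t) * |F0 x| * 1 :=
          mul_le_mul_of_nonneg_left hexp (mul_nonneg hWx (abs_nonneg _))
      _ = W (x + t) * |F0 x| := mul_one _
      _ ≤ Cw * |F0 x| := mul_le_mul_of_nonneg_right hWx2 (abs_nonneg _)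
  · exact (hF0i.norm.const_mul Cw)
  · refine Eventually.of_forall fun x => ?_
    refine Continuous.continuousOn ?_
    exact ((hWc.comp (continuous_const.add continuous_id)).mul continuous_const).mul
      (((hPc.comp (continuous_const.add continuous_id)).sub continuous_const).neg.rexp)
end

section
/- (Invariance of the ball B_R under the fixed-point operator, inequality (4.15).) Suppose δ ∈ (0,1] satisfies δ ≤ min(1, R / (S_in·ess sup_{s∈[0,1]} D(s) + M‖h̄‖_∞ + M(‖k̃‖_∞ + M‖q̃‖_∞)(S_in + ‖ḡ‖_∞))). Then for every (y,z) ∈ B_R one has ‖T₁(y,z)‖_∞ + ‖T₂(y,z)‖_∞ ≤ R; in particular T maps B_R into B_R. -/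
open MeasureTheory Set Filter

noncomputable section

/-- Admissible inputs: `D ∈ L^∞_loc([0,∞); [0,∞))` (represented by a measurable,
non-negative function bounded on every compact interval `[0,T]`). -/
def AdmissibleInput (D : ℝ → ℝ) : Prop :=
  Measurable D ∧ (∀ t, 0 ≤ t → 0 ≤ D t) ∧
  ∀ T, 0 < T → ∃ C, ∀ t ∈ Icc (0:ℝ) T, D t ≤ C

/-- Standing assumptions on the model data `μ, β, k, q : [0,∞) → [0,∞)` and `S_in > 0`. -/
def ModelHyp (μ β k q : ℝ → ℝ) (S_in : ℝ) : Prop :=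
  ContinuousOn μ (Ici 0) ∧ (∀ s, 0 ≤ s → 0 ≤ μ s) ∧ (∃ C, ∀ s, 0 ≤ s → μ s ≤ C) ∧
  ContDiffOn ℝ 1 μ (Ici 0) ∧ μ 0 = 0 ∧ (∀ s, 0 < s → 0 < μ s) ∧
  ContinuousOn β (Ici 0) ∧ (∀ a, 0 ≤ a → 0 ≤ β a) ∧ (∃ C, ∀ a, 0 ≤ a → β a ≤ C) ∧
  ContinuousOn k (Ici 0) ∧ (∀ a, 0 ≤ a → 0 ≤ k a) ∧ (∃ C, ∀ a, 0 ≤ a → k a ≤ C) ∧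
  ContinuousOn q (Ici 0) ∧ (∀ a, 0 ≤ a → 0 ≤ q a) ∧ (∃ C, ∀ a, 0 ≤ a → q a ≤ C) ∧
  (0 < ∫⁻ a in Ioi (0:ℝ), ENNReal.ofReal (k a)) ∧
  (0 < ∫⁻ a in Ioi (0:ℝ), ENNReal.ofReal (q a)) ∧
  0 < S_in

/-- `ḡ` (resp. `h̄`) of (4.5): `t ↦ ∫_t^∞ w(a) f₀(a−t) exp(−∫_{a−t}^a β) da`
for `w = k` (resp. `w = q`). -/
def kernelInt (w β f₀ : ℝ → ℝ) (t : ℝ) : ℝ :=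
  ∫ a in Ioi t, w a * f₀ (a - t) * Real.exp (-(∫ s in (a - t)..a, β s))

/-- `b` of (4.5): `b(t) = exp(−∫₀^t D(s) ds)`. -/
def bInput (D : ℝ → ℝ) (t : ℝ) : ℝ := Real.exp (-(∫ s in (0:ℝ)..t, D s))

/-- `k̃` (resp. `q̃`) of (4.6): `a ↦ w(a)·exp(−∫₀^a β(s) ds)`. -/
def discounted (w β : ℝ → ℝ) (a : ℝ) : ℝ :=
  w a * Real.exp (-(∫ s in (0:ℝ)..a, β s))

/-- The first component (4.9) of the fixed-point operator. -/
def T1op (μ k β f₀ : ℝ → ℝ) (S₀ : ℝ) (y z : ℝ → ℝ) (t : ℝ) : ℝ :=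
  ∫ a in (0:ℝ)..t,
    discounted k β a * μ (z (t - a) + S₀) * (y (t - a) + kernelInt k β f₀ (t - a))

/-- The second component (4.10) of the fixed-point operator. -/
def T2op (μ k q β f₀ D : ℝ → ℝ) (S_in S₀ : ℝ) (y z : ℝ → ℝ) (t : ℝ) : ℝ :=
  (S_in - S₀) * (1 - bInput D t)
    - bInput D t * (∫ τ in (0:ℝ)..t, μ (z τ + S₀) * kernelInt q β f₀ τ)
    - bInput D t * ∫ τ in (0:ℝ)..t, μ (z τ + S₀) *
        ∫ a in (0:ℝ)..τ,
          discounted q β a * μ (z (τ - a) + S₀) * (y (τ - a) + kernelInt k β f₀ (τ - a))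

/-- Membership in the closed ball `B_R ⊆ H = C⁰([0,δ];ℝ²)`, where the `H`-norm is
`‖(y,z)‖_H = max_{[0,δ]}|y| + max_{[0,δ]}|z|` (the bound `‖(y,z)‖_H ≤ R` is expressed
pairwise: `|y t₁| + |z t₂| ≤ R` for all `t₁, t₂ ∈ [0,δ]`). -/
def MemBR (δ R : ℝ) (y z : ℝ → ℝ) : Prop :=
  ContinuousOn y (Icc 0 δ) ∧ ContinuousOn z (Icc 0 δ) ∧
  ∀ t₁ ∈ Icc 0 δ, ∀ t₂ ∈ Icc 0 δ, |y t₁| + |z t₂| ≤ R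

lemma kernelInt_eq_shift (w β f₀ : ℝ → ℝ) (t : ℝ) :
    kernelInt w β f₀ t
      = ∫ u in Ioi (0:ℝ), w (u + t) * f₀ u * Real.exp (-(∫ s in u..(u + t), β s)) := by
  unfold kernelInt
  rw [← integral_indicator measurableSet_Ioi, ← integral_indicator measurableSet_Ioi,
    ← MeasureTheory.integral_add_right_eq_self
      (fun a => (Ioi t).indicator
        (fun a => w a * f₀ (a - t) * Real.exp (-(∫ s in (a - t)..a, β s))) a) t]
  congr 1; ext u
  by_cases hu : u ∈ Ioi (0:ℝ)
  · have h2 : u + t ∈ Ioi t := by simpa using hu.out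
    rw [indicator_of_mem hu, indicator_of_mem h2]
    simp
  · have h2 : u + t ∉ Ioi t := by simpa using hu
    rw [indicator_of_notMem hu, indicator_of_notMem h2]

lemma kernelInt_contOn (w β f₀ : ℝ → ℝ) (Cw : ℝ)
    (hw : ContinuousOn w (Ici 0)) (hw0 : ∀ a, 0 ≤ a → 0 ≤ w a) (hwC : ∀ a, 0 ≤ a → w a ≤ Cw)
    (hβ : ContinuousOn β (Ici 0)) (hβ0 : ∀ a, 0 ≤ a → 0 ≤ β a)
    (hf₀c : ContinuousOn f₀ (Ici 0)) (hf₀p : ∀ a, 0 ≤ a → 0 < f₀ a)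
    (hf₀i : IntegrableOn f₀ (Ioi 0)) :
    ContinuousOn (kernelInt w β f₀) (Ici 0) := by
  have hmax : ∀ x : ℝ, max 0 x ∈ Ici (0:ℝ) := fun x => mem_Ici.2 (le_max_left _ _)
  have hmaxc : Continuous (fun x : ℝ => max 0 x) := continuous_const.max continuous_id
  set wE : ℝ → ℝ := fun s => w (max 0 s) with hwEdef
  set βE : ℝ → ℝ := fun s => β (max 0 s) with hβEdef
  set fE : ℝ → ℝ := fun s => f₀ (max 0 s) with hfEdef
  have hwEc : Continuous wE := hw.comp_continuous hmaxc hmax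
  have hβEc : Continuous βE := hβ.comp_continuous hmaxc hmax
  have hfEc : Continuous fE := hf₀c.comp_continuous hmaxc hmax
  have hβE0 : ∀ s, 0 ≤ βE s := fun s => hβ0 _ (hmax s)
  set Bp : ℝ → ℝ := fun x => ∫ s in (0:ℝ)..x, βE s with hBpdef
  have hBpc : Continuous Bp :=
    intervalIntegral.continuous_primitive (fun a b => hβEc.intervalIntegrable a b) 0
  have hBpmono : ∀ u v : ℝ, u ≤ v → Bp u ≤ Bp v := by
    intro u v huv
    have : Bp v - Bp u = ∫ s in u..v, βE s := by
      rw [intervalIntegral.integral_interval_sub_left (hβEc.intervalIntegrable 0 v)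
        (hβEc.intervalIntegrable 0 u)]
    have h2 : 0 ≤ ∫ s in u..v, βE s :=
      intervalIntegral.integral_nonneg huv (fun s _ => hβE0 s)
    linarith
  set Φ : ℝ → ℝ → ℝ := fun t u => wE (u + t) * fE u * Real.exp (Bp u - Bp (u + t)) with hΦdef
  have hint_eq : ∀ t : ℝ, 0 ≤ t → ∀ u : ℝ, 0 < u →
      (∫ s in u..(u + t), β s) = Bp (u + t) - Bp u := by
    intro t ht u hu
    have h1 : (∫ s in u..(u + t), β s) = ∫ s in u..(u + t), βE s := by
      apply intervalIntegral.integral_congr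
      intro s hs
      rw [uIcc_of_le (by linarith)] at hs
      have : (0:ℝ) ≤ s := le_trans hu.le hs.1
      simp [hβEdef, max_eq_right this]
    rw [h1, ← intervalIntegral.integral_interval_sub_left (hβEc.intervalIntegrable 0 (u + t))
        (hβEc.intervalIntegrable 0 u)]
  have key : ∀ t ∈ Ici (0:ℝ), kernelInt w β f₀ t = ∫ u in Ioi (0:ℝ), Φ t u := by
    intro t ht
    rw [kernelInt_eq_shift]
    refine setIntegral_congr_fun measurableSet_Ioi (fun u hu => ?_)
    have hu0 : (0:ℝ) < u := hu
    have hut : (0:ℝ) ≤ u + t := by linarith [mem_Ici.1 ht]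
    simp only [hΦdef, hwEdef, hfEdef, max_eq_right hut, max_eq_right hu0.le,
      hint_eq t ht u hu0]
    ring_nf
  have hfEi : IntegrableOn fE (Ioi 0) := by
    refine hf₀i.congr_fun (fun u hu => ?_) measurableSet_Ioi
    simp [hfEdef, max_eq_right (le_of_lt (mem_Ioi.1 hu))]
  have hCw0 : 0 ≤ Cw := le_trans (hw0 0 le_rfl) (hwC 0 le_rfl)
  have hcont : ∀ t₀ ∈ Ici (0:ℝ),
      ContinuousWithinAt (fun t => ∫ u in Ioi (0:ℝ), Φ t u) (Ici 0) t₀ := by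
    intro t₀ ht₀
    apply MeasureTheory.continuousWithinAt_of_dominated (bound := fun u => Cw * fE u)
    · refine Eventually.of_forall (fun t => Continuous.aestronglyMeasurable ?_)
      exact ((hwEc.comp (continuous_id.add continuous_const)).mul hfEc).mul
        (Real.continuous_exp.comp (hBpc.sub (hBpc.comp (continuous_id.add continuous_const))))
    · filter_upwards [eventually_mem_nhdsWithin] with t ht
      filter_upwards [ae_restrict_mem measurableSet_Ioi] with u hu
      have hu0 : (0:ℝ) < u := hu
      have ht0 : (0:ℝ) ≤ t := ht
      have h1 : 0 ≤ wE (u + t) := hw0 _ (hmax _)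
      have h2 : 0 ≤ fE u := (hf₀p _ (hmax _)).le
      have h3 : wE (u + t) ≤ Cw := hwC _ (hmax _)
      have h4 : Real.exp (Bp u - Bp (u + t)) ≤ 1 := by
        rw [Real.exp_le_one_iff]
        have := hBpmono u (u + t) (by linarith)
        linarith
      have h5 : Φ t u = wE (u + t) * fE u * Real.exp (Bp u - Bp (u + t)) := rfl
      rw [Real.norm_eq_abs, h5, abs_of_nonneg (by positivity)]
      calc wE (u + t) * fE u * Real.exp (Bp u - Bp (u + t))
          ≤ Cw * fE u * 1 := by
            apply mul_le_mul (mul_le_mul h3 le_rfl h2 hCw0) h4 (Real.exp_pos _).le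
              (by positivity)
        _ = Cw * fE u := by ring
    · exact hfEi.const_mul Cw
    · refine Eventually.of_forall (fun u => Continuous.continuousWithinAt ?_)
      exact ((hwEc.comp (continuous_const.add continuous_id)).mul continuous_const).mul
        (Real.continuous_exp.comp
          (continuous_const.sub (hBpc.comp (continuous_const.add continuous_id))))
  intro t ht
  exact ((hcont t ht).congr (fun s hs => key s hs) (key t ht))

/-- **Invariance of the ball `B_R` under the fixed-point operator (inequality (4.15)).**
With `R = min(S₀, S_in−S₀)/2` and upper bounds `M ≥ sup μ`, `Cg ≥ ‖ḡ‖_∞`, `Ch ≥ ‖h̄‖_∞`,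
`Ck ≥ ‖k̃‖_∞`, `Cq ≥ ‖q̃‖_∞`, `CD ≥ ess sup_{[0,1]} D`, if `δ ∈ (0,1]` satisfies
`δ ≤ R/(S_in·CD + M·Ch + M(Ck + M·Cq)(S_in + Cg))`, then for every `(y,z) ∈ B_R` one has
`‖T₁(y,z)‖_∞ + ‖T₂(y,z)‖_∞ ≤ R`; in particular `T` maps `B_R` into `B_R`. -/
theorem ball_invariance_of_fixed_point_operator
    (μ β k q : ℝ → ℝ) (S_in : ℝ) (hmodel : ModelHyp μ β k q S_in)
    (f₀ : ℝ → ℝ) (hf₀c : ContinuousOn f₀ (Ici 0)) (hf₀p : ∀ a, 0 ≤ a → 0 < f₀ a)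
    (hf₀i : IntegrableOn f₀ (Ioi 0))
    (S₀ : ℝ) (hS₀ : S₀ ∈ Ioo 0 S_in)
    (D : ℝ → ℝ) (hD : AdmissibleInput D)
    (M Cg Ch Ck Cq CD : ℝ)
    (hM : ∀ s, 0 ≤ s → μ s ≤ M)
    (hCg : ∀ t ∈ Icc (0:ℝ) 1, |kernelInt k β f₀ t| ≤ Cg)
    (hCh : ∀ t ∈ Icc (0:ℝ) 1, |kernelInt q β f₀ t| ≤ Ch)
    (hCk : ∀ a, 0 ≤ a → |discounted k β a| ≤ Ck)
    (hCq : ∀ a, 0 ≤ a → |discounted q β a| ≤ Cq)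
    (hCD : ∀ᵐ s ∂volume, s ∈ Icc (0:ℝ) 1 → D s ≤ CD)
    (δ : ℝ) (hδ0 : 0 < δ) (hδ1 : δ ≤ 1)
    (hδ : δ ≤ (min S₀ (S_in - S₀) / 2)
        / (S_in * CD + M * Ch + M * (Ck + M * Cq) * (S_in + Cg))) :
    ∀ y z, MemBR δ (min S₀ (S_in - S₀) / 2) y z →
      MemBR δ (min S₀ (S_in - S₀) / 2)
        (T1op μ k β f₀ S₀ y z) (T2op μ k q β f₀ D S_in S₀ y z) := by
  obtain ⟨hμc, hμ0, ⟨Cμ, hCμ⟩, hμd, hμz, hμp, hβc, hβ0, ⟨Cβ, hCβ⟩, hkc, hk0, ⟨CkB, hCkB⟩,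
    hqc, hq0, ⟨CqB, hCqB⟩, hkpos, hqpos, hSin⟩ := hmodel
  obtain ⟨hS₀0, hS₀in⟩ := hS₀
  intro y z hyz
  obtain ⟨hyc, hzc, hbnd⟩ := hyz
  set R := min S₀ (S_in - S₀) / 2 with hRdef
  have hR0 : 0 < R := by
    have : 0 < min S₀ (S_in - S₀) := lt_min hS₀0 (by linarith)
    positivity
  have hRS₀ : R < S₀ := by
    have h1 : min S₀ (S_in - S₀) ≤ S₀ := min_le_left _ _
    rw [hRdef]; linarith
  have hRSin : R ≤ S_in := by
    have h1 : min S₀ (S_in - S₀) ≤ S_in - S₀ := min_le_right _ _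
    rw [hRdef]; linarith
  have hy : ∀ t ∈ Icc (0:ℝ) δ, |y t| ≤ R := fun t ht =>
    le_trans (le_add_of_nonneg_right (abs_nonneg _)) (hbnd t ht t ht)
  have hz : ∀ t ∈ Icc (0:ℝ) δ, |z t| ≤ R := fun t ht =>
    le_trans (le_add_of_nonneg_left (abs_nonneg _)) (hbnd t ht t ht)
  -- nonnegativity of the constants
  have hM0 : 0 ≤ M := le_trans (hμ0 0 le_rfl) (hM 0 le_rfl)
  have hCk0 : 0 ≤ Ck := le_trans (abs_nonneg _) (hCk 0 le_rfl)
  have hCq0 : 0 ≤ Cq := le_trans (abs_nonneg _) (hCq 0 le_rfl)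
  have hCg0 : 0 ≤ Cg := le_trans (abs_nonneg _) (hCg 0 ⟨le_rfl, zero_le_one⟩)
  have hCh0 : 0 ≤ Ch := le_trans (abs_nonneg _) (hCh 0 ⟨le_rfl, zero_le_one⟩)
  have hCD0 : 0 ≤ CD := by
    by_contra hcon
    push_neg at hcon
    have h1 : ∀ᵐ s : ℝ, s ∉ Icc (0:ℝ) 1 := by
      filter_upwards [hCD] with s hs
      intro hmem
      exact absurd (hs hmem) (not_le.2 (lt_of_lt_of_le hcon (hD.2.1 s hmem.1)))
    rw [ae_iff] at h1
    have h2 : {a : ℝ | ¬ a ∉ Icc (0:ℝ) 1} = Icc (0:ℝ) 1 := by ext s; simp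
    rw [h2, Real.volume_Icc] at h1
    simp at h1
  -- the key smallness inequality
  have hδkey : δ * (S_in * CD + M * Ch + M * (Ck + M * Cq) * (S_in + Cg)) ≤ R := by
    set key := S_in * CD + M * Ch + M * (Ck + M * Cq) * (S_in + Cg) with hkeydef
    have hkey0 : 0 ≤ key := by
      have h1 : 0 ≤ S_in + Cg := by linarith
      have h2 : 0 ≤ M * (Ck + M * Cq) * (S_in + Cg) := by positivity
      have h3 : 0 ≤ S_in * CD := by positivity
      have h4 : 0 ≤ M * Ch := by positivity
      rw [hkeydef]; linarith
    rcases eq_or_lt_of_le hkey0 with h | h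
    · rw [← h, mul_zero]; exact hR0.le
    · exact (le_div_iff₀ h).1 hδ
  -- continuity of the kernel integrals
  have hgc : ContinuousOn (kernelInt k β f₀) (Ici 0) :=
    kernelInt_contOn k β f₀ CkB hkc hk0 hCkB hβc hβ0 hf₀c hf₀p hf₀i
  have hhc : ContinuousOn (kernelInt q β f₀) (Ici 0) :=
    kernelInt_contOn q β f₀ CqB hqc hq0 hCqB hβc hβ0 hf₀c hf₀p hf₀i
  -- extended (globally continuous) versions of all ingredients
  have hmax : ∀ x : ℝ, max 0 x ∈ Ici (0:ℝ) := fun x => mem_Ici.2 (le_max_left _ _)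
  have hmaxc : Continuous (fun x : ℝ => max 0 x) := continuous_const.max continuous_id
  set π : ℝ → ℝ := fun s => max 0 (min δ s) with hπdef
  have hπc : Continuous π := continuous_const.max (continuous_const.min continuous_id)
  have hπmem : ∀ s, π s ∈ Icc (0:ℝ) δ := fun s =>
    ⟨le_max_left _ _, max_le hδ0.le (min_le_left _ _)⟩
  have hπid : ∀ s ∈ Icc (0:ℝ) δ, π s = s := fun s hs => by
    rw [hπdef]; simp only; rw [min_eq_right hs.2, max_eq_right hs.1]
  set μE : ℝ → ℝ := fun s => μ (max 0 s) with hμEdef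
  have hμEc : Continuous μE := hμc.comp_continuous hmaxc hmax
  set βE : ℝ → ℝ := fun s => β (max 0 s) with hβEdef
  have hβEc : Continuous βE := hβc.comp_continuous hmaxc hmax
  set Bp : ℝ → ℝ := fun x => ∫ s in (0:ℝ)..x, βE s with hBpdef
  have hBpc : Continuous Bp :=
    intervalIntegral.continuous_primitive (fun a b => hβEc.intervalIntegrable a b) 0
  have hBpeq : ∀ a : ℝ, 0 ≤ a → Bp a = ∫ s in (0:ℝ)..a, β s := by
    intro a ha
    apply intervalIntegral.integral_congr
    intro s hs
    rw [uIcc_of_le ha] at hs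
    simp [hβEdef, max_eq_right hs.1]
  set dEk : ℝ → ℝ := fun a => k (max 0 a) * Real.exp (-(Bp a)) with hdEkdef
  have hdEkc : Continuous dEk :=
    (hkc.comp_continuous hmaxc hmax).mul (Real.continuous_exp.comp hBpc.neg)
  have hdEkeq : ∀ a : ℝ, 0 ≤ a → dEk a = discounted k β a := by
    intro a ha
    rw [hdEkdef]; simp only
    rw [max_eq_right ha, hBpeq a ha]; rfl
  set dEq : ℝ → ℝ := fun a => q (max 0 a) * Real.exp (-(Bp a)) with hdEqdef
  have hdEqc : Continuous dEq :=
    (hqc.comp_continuous hmaxc hmax).mul (Real.continuous_exp.comp hBpc.neg)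
  have hdEqeq : ∀ a : ℝ, 0 ≤ a → dEq a = discounted q β a := by
    intro a ha
    rw [hdEqdef]; simp only
    rw [max_eq_right ha, hBpeq a ha]; rfl
  set yE : ℝ → ℝ := fun s => y (π s) with hyEdef
  have hyEc : Continuous yE := hyc.comp_continuous hπc hπmem
  set zE : ℝ → ℝ := fun s => z (π s) with hzEdef
  have hzEc : Continuous zE := hzc.comp_continuous hπc hπmem
  set gE : ℝ → ℝ := fun s => kernelInt k β f₀ (π s) with hgEdef
  have hgEc : Continuous gE := hgc.comp_continuous hπc (fun s => (hπmem s).1)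
  set hE : ℝ → ℝ := fun s => kernelInt q β f₀ (π s) with hhEdef
  have hhEc : Continuous hE := hhc.comp_continuous hπc (fun s => (hπmem s).1)
  set G1 : ℝ → ℝ := fun s => μE (zE s + S₀) * (yE s + gE s) with hG1def
  have hG1c : Continuous G1 :=
    (hμEc.comp (hzEc.add continuous_const)).mul (hyEc.add hgEc)
  have hzS₀ : ∀ s ∈ Icc (0:ℝ) δ, 0 ≤ z s + S₀ := by
    intro s hs
    have := (abs_le.1 (hz s hs)).1
    linarith
  have hG1eq : ∀ s ∈ Icc (0:ℝ) δ,
      G1 s = μ (z s + S₀) * (y s + kernelInt k β f₀ s) := by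
    intro s hs
    rw [hG1def]; simp only [hyEdef, hzEdef, hgEdef, hμEdef, hπid s hs,
      max_eq_right (hzS₀ s hs)]
  -- T1 continuity
  have hT1eq : ∀ t ∈ Icc (0:ℝ) δ,
      T1op μ k β f₀ S₀ y z t = ∫ a in (0:ℝ)..t, dEk a * G1 (t - a) := by
    intro t ht
    apply intervalIntegral.integral_congr
    intro a ha
    rw [uIcc_of_le ht.1] at ha
    have hta : t - a ∈ Icc (0:ℝ) δ := ⟨by linarith [ha.2], by linarith [ha.1, ht.2]⟩
    dsimp only
    rw [hdEkeq a ha.1, hG1eq _ hta, mul_assoc]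
  have hT1Ec : Continuous (fun t => ∫ a in (0:ℝ)..t, dEk a * G1 (t - a)) := by
    apply intervalIntegral.continuous_parametric_intervalIntegral_of_continuous
      (f := fun t a => dEk a * G1 (t - a)) _ continuous_id
    exact (hdEkc.comp continuous_snd).mul (hG1c.comp (continuous_fst.sub continuous_snd))
  have hT1cont : ContinuousOn (T1op μ k β f₀ S₀ y z) (Icc 0 δ) :=
    hT1Ec.continuousOn.congr hT1eq
  -- bInput continuity
  have hDint : IntegrableOn D (Icc 0 δ) := by
    obtain ⟨C, hC⟩ := hD.2.2 δ hδ0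
    refine Integrable.mono' (integrable_const C) hD.1.aestronglyMeasurable.restrict ?_
    filter_upwards [ae_restrict_mem measurableSet_Icc] with s hs
    rw [Real.norm_eq_abs, abs_of_nonneg (hD.2.1 s hs.1)]
    exact hC s hs
  have hbc : ContinuousOn (bInput D) (Icc 0 δ) := by
    have h1 : ContinuousOn (fun t => ∫ s in (0:ℝ)..t, D s) (Icc 0 δ) := by
      have := intervalIntegral.continuousOn_primitive_interval
        (a := 0) (b := δ) (μ := volume) (f := D) (by rwa [uIcc_of_le hδ0.le])
      rwa [uIcc_of_le hδ0.le] at this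
    exact Real.continuous_exp.comp_continuousOn h1.neg
  -- second term of T2
  set G2 : ℝ → ℝ := fun τ => μE (zE τ + S₀) * hE τ with hG2def
  have hG2c : Continuous G2 := (hμEc.comp (hzEc.add continuous_const)).mul hhEc
  have hP2c : Continuous (fun t => ∫ τ in (0:ℝ)..t, G2 τ) :=
    intervalIntegral.continuous_primitive (fun a b => hG2c.intervalIntegrable a b) 0
  have hG2eq : ∀ τ ∈ Icc (0:ℝ) δ, μ (z τ + S₀) * kernelInt q β f₀ τ = G2 τ := by
    intro τ hτ
    rw [hG2def]; simp only [hzEdef, hhEdef, hμEdef, hπid τ hτ, max_eq_right (hzS₀ τ hτ)]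
  have hT2aeq : ∀ t ∈ Icc (0:ℝ) δ,
      (∫ τ in (0:ℝ)..t, μ (z τ + S₀) * kernelInt q β f₀ τ) = ∫ τ in (0:ℝ)..t, G2 τ := by
    intro t ht
    apply intervalIntegral.integral_congr
    intro τ hτ
    rw [uIcc_of_le ht.1] at hτ
    exact hG2eq τ ⟨hτ.1, le_trans hτ.2 ht.2⟩
  -- third term of T2
  set IE : ℝ → ℝ := fun τ => ∫ a in (0:ℝ)..τ, dEq a * G1 (τ - a) with hIEdef
  have hIEc : Continuous IE := by
    apply intervalIntegral.continuous_parametric_intervalIntegral_of_continuous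
      (f := fun τ a => dEq a * G1 (τ - a)) _ continuous_id
    exact (hdEqc.comp continuous_snd).mul (hG1c.comp (continuous_fst.sub continuous_snd))
  have hIEeq : ∀ τ ∈ Icc (0:ℝ) δ,
      (∫ a in (0:ℝ)..τ, discounted q β a * μ (z (τ - a) + S₀) *
        (y (τ - a) + kernelInt k β f₀ (τ - a))) = IE τ := by
    intro τ hτ
    apply intervalIntegral.integral_congr
    intro a ha
    rw [uIcc_of_le hτ.1] at ha
    have hta : τ - a ∈ Icc (0:ℝ) δ := ⟨by linarith [ha.2], by linarith [ha.1, hτ.2]⟩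
    dsimp only
    rw [hdEqeq a ha.1, hG1eq _ hta, mul_assoc]
  set G3 : ℝ → ℝ := fun τ => μE (zE τ + S₀) * IE τ with hG3def
  have hG3c : Continuous G3 := (hμEc.comp (hzEc.add continuous_const)).mul hIEc
  have hP3c : Continuous (fun t => ∫ τ in (0:ℝ)..t, G3 τ) :=
    intervalIntegral.continuous_primitive (fun a b => hG3c.intervalIntegrable a b) 0
  have hT2beq : ∀ t ∈ Icc (0:ℝ) δ,
      (∫ τ in (0:ℝ)..t, μ (z τ + S₀) *
        ∫ a in (0:ℝ)..τ, discounted q β a * μ (z (τ - a) + S₀) *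
          (y (τ - a) + kernelInt k β f₀ (τ - a)))
        = ∫ τ in (0:ℝ)..t, G3 τ := by
    intro t ht
    apply intervalIntegral.integral_congr
    intro τ hτ
    rw [uIcc_of_le ht.1] at hτ
    have hτδ : τ ∈ Icc (0:ℝ) δ := ⟨hτ.1, le_trans hτ.2 ht.2⟩
    rw [hG3def]; simp only [hzEdef, hμEdef, hπid τ hτδ, max_eq_right (hzS₀ τ hτδ)]
    rw [hIEeq τ hτδ]
  have hT2cont : ContinuousOn (T2op μ k q β f₀ D S_in S₀ y z) (Icc 0 δ) := by
    have hc : ContinuousOn (fun t => (S_in - S₀) * (1 - bInput D t)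
        - bInput D t * (∫ τ in (0:ℝ)..t, G2 τ)
        - bInput D t * ∫ τ in (0:ℝ)..t, G3 τ) (Icc 0 δ) := by
      apply ContinuousOn.sub
      apply ContinuousOn.sub
      · exact continuousOn_const.mul (continuousOn_const.sub hbc)
      · exact hbc.mul hP2c.continuousOn
      · exact hbc.mul hP3c.continuousOn
    apply hc.congr
    intro t ht
    unfold T2op
    rw [hT2aeq t ht, hT2beq t ht]
  -- bound ingredients
  have hμb : ∀ s ∈ Icc (0:ℝ) δ, |μ (z s + S₀)| ≤ M := by
    intro s hs
    rw [abs_of_nonneg (hμ0 _ (hzS₀ s hs))]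
    exact hM _ (hzS₀ s hs)
  have hyg : ∀ s ∈ Icc (0:ℝ) δ, |y s + kernelInt k β f₀ s| ≤ R + Cg := by
    intro s hs
    exact (abs_add_le _ _).trans (add_le_add (hy s hs) (hCg s ⟨hs.1, le_trans hs.2 hδ1⟩))
  have hconv : ∀ (w : ℝ → ℝ) (Cw : ℝ), (∀ a, 0 ≤ a → |discounted w β a| ≤ Cw) → 0 ≤ Cw →
      ∀ t ∈ Icc (0:ℝ) δ,
      |∫ a in (0:ℝ)..t, discounted w β a * μ (z (t - a) + S₀) *
          (y (t - a) + kernelInt k β f₀ (t - a))|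
        ≤ Cw * M * (R + Cg) * t := by
    intro w Cw hCw hCw0 t ht
    have h1 : ‖∫ a in (0:ℝ)..t, discounted w β a * μ (z (t - a) + S₀) *
        (y (t - a) + kernelInt k β f₀ (t - a))‖ ≤ Cw * M * (R + Cg) * |t - 0| := by
      apply intervalIntegral.norm_integral_le_of_norm_le_const
      intro a ha
      rw [uIoc_of_le ht.1] at ha
      have ha0 : 0 ≤ a := ha.1.le
      have hta : t - a ∈ Icc (0:ℝ) δ := ⟨by linarith [ha.2], by linarith [ha.1, ht.2]⟩
      rw [Real.norm_eq_abs, abs_mul, abs_mul]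
      exact mul_le_mul (mul_le_mul (hCw a ha0) (hμb _ hta) (abs_nonneg _) hCw0)
        (hyg _ hta) (abs_nonneg _) (by positivity)
    rw [sub_zero, abs_of_nonneg ht.1, Real.norm_eq_abs] at h1
    exact h1
  -- facts about bInput
  have hDIle : ∀ t ∈ Icc (0:ℝ) δ, (∫ s in (0:ℝ)..t, D s) ≤ CD * t := by
    intro t ht
    rw [intervalIntegral.integral_of_le ht.1]
    have hsub : Ioc (0:ℝ) t ⊆ Icc (0:ℝ) δ := fun s hs => ⟨hs.1.le, le_trans hs.2 ht.2⟩
    have h1 : (∫ s in Ioc (0:ℝ) t, D s) ≤ ∫ _ in Ioc (0:ℝ) t, CD := by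
      apply setIntegral_mono_ae_restrict (hDint.mono_set hsub)
        (integrableOn_const measure_Ioc_lt_top.ne)
      filter_upwards [ae_restrict_mem measurableSet_Ioc, ae_restrict_of_ae hCD] with s hs h2
      exact h2 ⟨hs.1.le, le_trans hs.2 (le_trans ht.2 hδ1)⟩
    rw [setIntegral_const, measureReal_def, Real.volume_Ioc, sub_zero, ENNReal.toReal_ofReal ht.1,
      smul_eq_mul] at h1
    linarith
  have hDInn : ∀ t ∈ Icc (0:ℝ) δ, 0 ≤ ∫ s in (0:ℝ)..t, D s := fun t ht =>
    intervalIntegral.integral_nonneg ht.1 (fun s hs => hD.2.1 s hs.1)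
  have hble : ∀ t ∈ Icc (0:ℝ) δ, bInput D t ≤ 1 := by
    intro t ht
    rw [bInput, Real.exp_le_one_iff]
    linarith [hDInn t ht]
  have hbnn : ∀ t, 0 ≤ bInput D t := fun t => (Real.exp_pos _).le
  have h1mble : ∀ t ∈ Icc (0:ℝ) δ, 1 - bInput D t ≤ CD * t := by
    intro t ht
    have h2 := Real.add_one_le_exp (-(∫ s in (0:ℝ)..t, D s))
    have h3 := hDIle t ht
    rw [bInput]
    linarith
  -- T1 bound
  have hT1bnd : ∀ t ∈ Icc (0:ℝ) δ,
      |T1op μ k β f₀ S₀ y z t| ≤ δ * (M * Ck * (S_in + Cg)) := by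
    intro t ht
    calc |T1op μ k β f₀ S₀ y z t| ≤ Ck * M * (R + Cg) * t := hconv k Ck hCk hCk0 t ht
      _ ≤ Ck * M * (S_in + Cg) * δ := by
          have hnn : (0:ℝ) ≤ Ck * M := mul_nonneg hCk0 hM0
          have hnn2 : (0:ℝ) ≤ S_in + Cg := by linarith
          exact mul_le_mul (mul_le_mul_of_nonneg_left (by linarith) hnn) ht.2 ht.1
            (mul_nonneg hnn hnn2)
      _ = δ * (M * Ck * (S_in + Cg)) := by ring
  -- T2 bound
  have hT2bnd : ∀ t ∈ Icc (0:ℝ) δ,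
      |T2op μ k q β f₀ D S_in S₀ y z t|
        ≤ δ * (S_in * CD) + δ * (M * Ch) + δ * (M * (M * Cq) * (S_in + Cg)) := by
    intro t ht
    have hA : |(S_in - S₀) * (1 - bInput D t)| ≤ δ * (S_in * CD) := by
      have h0 : 0 ≤ 1 - bInput D t := by linarith [hble t ht]
      rw [abs_mul, abs_of_nonneg (by linarith : (0:ℝ) ≤ S_in - S₀), abs_of_nonneg h0]
      calc (S_in - S₀) * (1 - bInput D t) ≤ S_in * (CD * δ) := by
            apply mul_le_mul (by linarith)
              (le_trans (h1mble t ht) (mul_le_mul_of_nonneg_left ht.2 hCD0)) h0 (by linarith)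
        _ = δ * (S_in * CD) := by ring
    have hB : |bInput D t * ∫ τ in (0:ℝ)..t, μ (z τ + S₀) * kernelInt q β f₀ τ|
        ≤ δ * (M * Ch) := by
      rw [abs_mul, abs_of_nonneg (hbnn t)]
      have h1 : ‖∫ τ in (0:ℝ)..t, μ (z τ + S₀) * kernelInt q β f₀ τ‖ ≤ M * Ch * |t - 0| := by
        apply intervalIntegral.norm_integral_le_of_norm_le_const
        intro τ hτ
        rw [uIoc_of_le ht.1] at hτ
        have hτδ : τ ∈ Icc (0:ℝ) δ := ⟨hτ.1.le, le_trans hτ.2 ht.2⟩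
        rw [Real.norm_eq_abs, abs_mul]
        exact mul_le_mul (hμb _ hτδ) (hCh τ ⟨hτδ.1, le_trans hτδ.2 hδ1⟩) (abs_nonneg _) hM0
      rw [sub_zero, abs_of_nonneg ht.1] at h1
      rw [Real.norm_eq_abs] at h1
      calc bInput D t * |∫ τ in (0:ℝ)..t, μ (z τ + S₀) * kernelInt q β f₀ τ|
          ≤ 1 * (M * Ch * δ) := by
            apply mul_le_mul (hble t ht) (le_trans h1
              (mul_le_mul_of_nonneg_left ht.2 (by positivity))) (abs_nonneg _) zero_le_one
        _ = δ * (M * Ch) := by ring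
    have hC : |bInput D t * ∫ τ in (0:ℝ)..t, μ (z τ + S₀) *
        ∫ a in (0:ℝ)..τ, discounted q β a * μ (z (τ - a) + S₀) *
          (y (τ - a) + kernelInt k β f₀ (τ - a))|
        ≤ δ * (M * (M * Cq) * (S_in + Cg)) := by
      rw [abs_mul, abs_of_nonneg (hbnn t)]
      have h1 : ‖∫ τ in (0:ℝ)..t, μ (z τ + S₀) *
          ∫ a in (0:ℝ)..τ, discounted q β a * μ (z (τ - a) + S₀) *
            (y (τ - a) + kernelInt k β f₀ (τ - a))‖
          ≤ M * (Cq * M * (R + Cg) * δ) * |t - 0| := by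
        apply intervalIntegral.norm_integral_le_of_norm_le_const
        intro τ hτ
        rw [uIoc_of_le ht.1] at hτ
        have hτδ : τ ∈ Icc (0:ℝ) δ := ⟨hτ.1.le, le_trans hτ.2 ht.2⟩
        rw [Real.norm_eq_abs, abs_mul]
        have h2 : |∫ a in (0:ℝ)..τ, discounted q β a * μ (z (τ - a) + S₀) *
            (y (τ - a) + kernelInt k β f₀ (τ - a))| ≤ Cq * M * (R + Cg) * δ := by
          refine le_trans (hconv q Cq hCq hCq0 τ hτδ) ?_
          refine mul_le_mul_of_nonneg_left hτδ.2 ?_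
          have : 0 ≤ R + Cg := by linarith
          positivity
        exact mul_le_mul (hμb _ hτδ) h2 (abs_nonneg _) hM0
      rw [sub_zero, abs_of_nonneg ht.1, Real.norm_eq_abs] at h1
      calc bInput D t * |∫ τ in (0:ℝ)..t, μ (z τ + S₀) *
          ∫ a in (0:ℝ)..τ, discounted q β a * μ (z (τ - a) + S₀) *
            (y (τ - a) + kernelInt k β f₀ (τ - a))|
          ≤ 1 * (M * (Cq * M * (R + Cg) * δ) * t) := by
            exact mul_le_mul (hble t ht) h1 (abs_nonneg _) zero_le_one
        _ = M * (M * Cq) * (R + Cg) * (δ * t) := by ring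
        _ ≤ M * (M * Cq) * (S_in + Cg) * (δ * 1) := by
            have hnn : (0:ℝ) ≤ M * (M * Cq) := mul_nonneg hM0 (mul_nonneg hM0 hCq0)
            have hnn2 : (0:ℝ) ≤ S_in + Cg := by linarith
            exact mul_le_mul (mul_le_mul_of_nonneg_left (by linarith) hnn)
              (by nlinarith [ht.1, ht.2, hδ0.le] : δ * t ≤ δ * 1)
              (mul_nonneg hδ0.le ht.1) (mul_nonneg hnn hnn2)
        _ = δ * (M * (M * Cq) * (S_in + Cg)) := by ring
    calc |T2op μ k q β f₀ D S_in S₀ y z t|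
        ≤ |(S_in - S₀) * (1 - bInput D t)|
          + |bInput D t * ∫ τ in (0:ℝ)..t, μ (z τ + S₀) * kernelInt q β f₀ τ|
          + |bInput D t * ∫ τ in (0:ℝ)..t, μ (z τ + S₀) *
              ∫ a in (0:ℝ)..τ, discounted q β a * μ (z (τ - a) + S₀) *
                (y (τ - a) + kernelInt k β f₀ (τ - a))| := by
            unfold T2op
            exact (abs_sub _ _).trans (add_le_add_left (abs_sub _ _) _)
      _ ≤ δ * (S_in * CD) + δ * (M * Ch) + δ * (M * (M * Cq) * (S_in + Cg)) := by
            exact add_le_add (add_le_add hA hB) hC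
  refine ⟨hT1cont, hT2cont, ?_⟩
  intro t₁ ht₁ t₂ ht₂
  have hexp : δ * (S_in * CD + M * Ch + M * (Ck + M * Cq) * (S_in + Cg))
      = δ * (M * Ck * (S_in + Cg)) + (δ * (S_in * CD) + δ * (M * Ch)
        + δ * (M * (M * Cq) * (S_in + Cg))) := by ring
  linarith [hT1bnd t₁ ht₁, hT2bnd t₂ ht₂, hδkey, hexp]
end
end

section
/- (Existence of a fixed point solving the Volterra integral system (4.19)–(4.20).) There exists a constant K > 0, depending only on μ, k, q and S_in (for instance K = 1 + (M/S_in + L_μ)(‖q‖_∞ + (‖k‖_∞ + M‖q‖_∞)‖k‖_∞) + (M + L_μ S_in)(M‖q‖_∞ + ‖k‖_∞) with L_μ = max_{0≤s≤S_in}|μ'(s)|), such that for every δ ∈ (0, min(S₀, S_in−S₀) / (2K·S_in·(‖f₀‖_{L¹} + ess sup_{s∈[0,1]} D(s) + 1))], the operator T is a contraction on B_R and there exists (y,z) ∈ B_R satisfying, for all t ∈ [0,δ]: y(t) = ∫₀^t k̃(a)·μ(z(t−a)+S₀)·(y(t−a)+ḡ(t−a)) da and z(t) = (S_in−S₀)(1−b(t))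 − b(t)∫₀^t μ(z(τ)+S₀)h̄(τ)dτ − b(t)∫₀^t μ(z(τ)+S₀)(∫₀^τ q̃(a)·μ(z(τ−a)+S₀)·(y(τ−a)+ḡ(τ−a)) da) dτ. -/
open MeasureTheory Set Filter

noncomputable section

set_option linter.unusedSectionVars false

namespace VFP

variable {β w f₀ : ℝ → ℝ} {Cβ Cw : ℝ}

/-- clamped primitive of `β` -/
def Bf (β : ℝ → ℝ) (x : ℝ) : ℝ := ∫ s in (0:ℝ)..(max x 0), β s

lemma betaII (hβc : ContinuousOn β (Ici 0)) {a b : ℝ} (ha : 0 ≤ a) (hb : 0 ≤ b) :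
    IntervalIntegrable β volume a b :=
  (hβc.mono ((uIcc_subset_Icc ⟨ha, le_max_left a b⟩ ⟨hb, le_max_right a b⟩).trans
    (Icc_subset_Ici_self))).intervalIntegrable

lemma Bf_sub (hβc : ContinuousOn β (Ici 0)) {x y : ℝ} (hx : 0 ≤ x) (hy : 0 ≤ y) :
    Bf β y - Bf β x = ∫ s in x..y, β s := by
  have h := intervalIntegral.integral_add_adjacent_intervals (μ := volume) (f := β)
    (betaII hβc le_rfl hx) (betaII hβc hx hy)
  simp only [Bf, max_eq_left hx, max_eq_left hy]
  linarith

lemma Bf_nonneg (hβ0 : ∀ a, 0 ≤ a → 0 ≤ β a) (x : ℝ) : 0 ≤ Bf β x :=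
  intervalIntegral.integral_nonneg (le_max_right x 0) (fun u hu => hβ0 u hu.1)

lemma Bf_mono (hβc : ContinuousOn β (Ici 0)) (hβ0 : ∀ a, 0 ≤ a → 0 ≤ β a) :
    Monotone (Bf β) := by
  intro x y hxy
  have h1 : max x 0 ≤ max y 0 := max_le_max hxy le_rfl
  have h2 : Bf β y - Bf β x = ∫ s in (max x 0)..(max y 0), β s := by
    have := Bf_sub hβc (le_max_right x 0) (le_max_right y 0)
    simpa [Bf, max_eq_left (le_max_right x 0), max_eq_left (le_max_right y 0)] using this
  have h3 : 0 ≤ ∫ s in (max x 0)..(max y 0), β s :=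
    intervalIntegral.integral_nonneg h1 (fun u hu => hβ0 u (le_trans (le_max_right x 0) hu.1))
  linarith

lemma Bf_lip (hβc : ContinuousOn β (Ici 0)) (hβ0 : ∀ a, 0 ≤ a → 0 ≤ β a)
    (hCβ : ∀ a, 0 ≤ a → β a ≤ Cβ) (x y : ℝ) : |Bf β x - Bf β y| ≤ Cβ * |x - y| := by
  have hCβ0 : 0 ≤ Cβ := le_trans (hβ0 0 le_rfl) (hCβ 0 le_rfl)
  have key : Bf β x - Bf β y = ∫ s in (max y 0)..(max x 0), β s := by
    have := Bf_sub hβc (le_max_right y 0) (le_max_right x 0)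
    simpa [Bf, max_eq_left (le_max_right x 0), max_eq_left (le_max_right y 0)] using this
  rw [key]
  calc |∫ s in (max y 0)..(max x 0), β s| ≤ Cβ * |max x 0 - max y 0| := by
        rw [← Real.norm_eq_abs]
        apply intervalIntegral.norm_integral_le_of_norm_le_const
        intro u hu
        have hu0 : (0:ℝ) ≤ u :=
          le_trans (le_min (le_max_right y 0) (le_max_right x 0)) hu.1.le
        rw [Real.norm_eq_abs, abs_of_nonneg (hβ0 u hu0)]
        exact hCβ u hu0
    _ ≤ Cβ * |x - y| := by
        have := abs_max_sub_max_le_abs x y 0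
        exact mul_le_mul_of_nonneg_left this hCβ0

lemma Bf_cont (hβc : ContinuousOn β (Ici 0)) (hβ0 : ∀ a, 0 ≤ a → 0 ≤ β a)
    (hCβ : ∀ a, 0 ≤ a → β a ≤ Cβ) : Continuous (Bf β) := by
  have hCβ0 : 0 ≤ Cβ := le_trans (hβ0 0 le_rfl) (hCβ 0 le_rfl)
  have : LipschitzWith (Real.toNNReal Cβ) (Bf β) := by
    apply LipschitzWith.of_dist_le_mul
    intro x y
    rw [Real.dist_eq, Real.dist_eq, Real.coe_toNNReal _ hCβ0]
    exact Bf_lip hβc hβ0 hCβ x y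
  exact this.continuous


/-- smoothed version of `kernelInt` -/
def Gg (w β f₀ : ℝ → ℝ) (t : ℝ) : ℝ :=
  ∫ u in Ioi (0:ℝ), w (u + max t 0) * f₀ u * Real.exp (Bf β u - Bf β (u + max t 0))

section Gg

variable (hβc : ContinuousOn β (Ici 0)) (hβ0 : ∀ a, 0 ≤ a → 0 ≤ β a)
  (hCβ : ∀ a, 0 ≤ a → β a ≤ Cβ)
  (hwc : ContinuousOn w (Ici 0)) (hw0 : ∀ a, 0 ≤ a → 0 ≤ w a)
  (hCw : ∀ a, 0 ≤ a → w a ≤ Cw)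
  (hfc : ContinuousOn f₀ (Ici 0)) (hfi : IntegrableOn f₀ (Ioi 0))

include hβc hβ0 hCβ hwc hw0 hCw hfc hfi

lemma Gg_meas (t : ℝ) :
    AEStronglyMeasurable
      (fun u => w (u + max t 0) * f₀ u * Real.exp (Bf β u - Bf β (u + max t 0)))
      (volume.restrict (Ioi 0)) := by
  apply ContinuousOn.aestronglyMeasurable _ measurableSet_Ioi
  apply ContinuousOn.mul
  apply ContinuousOn.mul
  · exact hwc.comp ((continuous_add_right (max t 0)).continuousOn)
      (fun u hu => add_nonneg (le_of_lt hu) (le_max_right t 0))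
  · exact hfc.mono (Ioi_subset_Ici le_rfl)
  · exact (Real.continuous_exp.comp
      (((Bf_cont hβc hβ0 hCβ)).sub ((Bf_cont hβc hβ0 hCβ).comp
        (continuous_add_right (max t 0))))).continuousOn

lemma Gg_ptbound (t : ℝ) : ∀ u ∈ Ioi (0:ℝ),
    ‖w (u + max t 0) * f₀ u * Real.exp (Bf β u - Bf β (u + max t 0))‖ ≤ Cw * ‖f₀ u‖ := by
  intro u hu
  have hu0 : (0:ℝ) ≤ u := (le_of_lt hu)
  have harg : (0:ℝ) ≤ u + max t 0 := add_nonneg hu0 (le_max_right t 0)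
  have hw1 : |w (u + max t 0)| ≤ Cw := by
    rw [abs_of_nonneg (hw0 _ harg)]; exact hCw _ harg
  have he1 : |Real.exp (Bf β u - Bf β (u + max t 0))| ≤ 1 := by
    rw [abs_of_pos (Real.exp_pos _)]
    rw [Real.exp_le_one_iff]
    have := Bf_mono hβc hβ0 (le_add_of_nonneg_right (le_max_right t 0) : u ≤ u + max t 0)
    linarith
  have hCw0 : 0 ≤ Cw := le_trans (hw0 0 le_rfl) (hCw 0 le_rfl)
  rw [Real.norm_eq_abs, Real.norm_eq_abs, abs_mul, abs_mul]
  calc |w (u + max t 0)| * |f₀ u| * |Real.exp (Bf β u - Bf β (u + max t 0))|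
      ≤ Cw * |f₀ u| * 1 := by
        apply mul_le_mul _ he1 (abs_nonneg _) (mul_nonneg hCw0 (abs_nonneg _))
        exact mul_le_mul_of_nonneg_right hw1 (abs_nonneg _)
    _ = Cw * |f₀ u| := mul_one _

lemma Gg_aebound (t : ℝ) : ∀ᵐ u ∂(volume.restrict (Ioi (0:ℝ))),
    ‖w (u + max t 0) * f₀ u * Real.exp (Bf β u - Bf β (u + max t 0))‖ ≤ Cw * ‖f₀ u‖ :=
  (ae_restrict_iff' measurableSet_Ioi).2 (ae_of_all _
    (Gg_ptbound hβc hβ0 hCβ hwc hw0 hCw hfc hfi t))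

lemma Gg_bddInt : Integrable (fun u => Cw * ‖f₀ u‖) (volume.restrict (Ioi (0:ℝ))) :=
  (hfi.norm).const_mul Cw

lemma Gg_intOn (t : ℝ) :
    IntegrableOn (fun u => w (u + max t 0) * f₀ u * Real.exp (Bf β u - Bf β (u + max t 0)))
      (Ioi (0:ℝ)) :=
  Integrable.mono' (Gg_bddInt hβc hβ0 hCβ hwc hw0 hCw hfc hfi)
    (Gg_meas hβc hβ0 hCβ hwc hw0 hCw hfc hfi t)
    (Gg_aebound hβc hβ0 hCβ hwc hw0 hCw hfc hfi t)

lemma Gg_bound (t : ℝ) : |Gg w β f₀ t| ≤ Cw * ∫ u in Ioi (0:ℝ), |f₀ u| := by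
  have h := norm_integral_le_of_norm_le (Gg_bddInt hβc hβ0 hCβ hwc hw0 hCw hfc hfi)
    (Gg_aebound hβc hβ0 hCβ hwc hw0 hCw hfc hfi t)
  rw [Real.norm_eq_abs] at h
  calc |Gg w β f₀ t| ≤ ∫ u in Ioi (0:ℝ), Cw * ‖f₀ u‖ := h
    _ = Cw * ∫ u in Ioi (0:ℝ), |f₀ u| := by
        rw [integral_const_mul]; simp [Real.norm_eq_abs]

lemma Gg_cont : Continuous (Gg w β f₀) := by
  apply continuous_of_dominated (bound := fun u => Cw * ‖f₀ u‖)
  · exact Gg_meas hβc hβ0 hCβ hwc hw0 hCw hfc hfi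
  · exact Gg_aebound hβc hβ0 hCβ hwc hw0 hCw hfc hfi
  · exact Gg_bddInt hβc hβ0 hCβ hwc hw0 hCw hfc hfi
  · refine (ae_restrict_iff' measurableSet_Ioi).2 (ae_of_all _ (fun u hu => ?_))
    have hmt : Continuous fun t : ℝ => u + max t 0 :=
      continuous_const.add (continuous_max.comp (continuous_id.prodMk continuous_const))
    have hBc := Bf_cont hβc hβ0 hCβ
    have c1 : Continuous fun t : ℝ => w (u + max t 0) :=
      hwc.comp_continuous hmt (fun t => add_nonneg (le_of_lt hu) (le_max_right t 0))
    have c2 : Continuous fun t : ℝ => Real.exp (Bf β u - Bf β (u + max t 0)) :=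
      Real.continuous_exp.comp (continuous_const.sub (hBc.comp hmt))
    exact (c1.mul continuous_const).mul c2

lemma Gg_eq {t : ℝ} (ht : 0 ≤ t) : kernelInt w β f₀ t = Gg w β f₀ t := by
  unfold kernelInt Gg
  have hmt : max t 0 = t := max_eq_left ht
  rw [hmt]
  have h1 : EqOn (fun a => w a * f₀ (a - t) * Real.exp (-(∫ s in (a-t)..a, β s)))
      (fun a => w a * f₀ (a - t) * Real.exp (Bf β (a - t) - Bf β a)) (Ioi t) := by
    intro a ha
    have h0at : (0:ℝ) ≤ a - t := by
      have : t < a := ha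
      linarith
    have h0a : (0:ℝ) ≤ a := le_trans ht (by have : t < a := ha; linarith)
    have := Bf_sub hβc h0at h0a
    simp only
    congr 2
    linarith
  rw [setIntegral_congr_fun measurableSet_Ioi h1]
  have hemb := (measurableEmbedding_addRight t).setIntegral_map (μ := volume)
    (fun a => w a * f₀ (a - t) * Real.exp (Bf β (a - t) - Bf β a)) (Ioi t)
  rw [map_add_right_eq_self] at hemb
  have hpre : (fun x => x + t) ⁻¹' (Ioi t) = Ioi (0:ℝ) := by
    ext x; simp
  rw [hpre] at hemb
  rw [hemb]
  refine setIntegral_congr_fun measurableSet_Ioi (fun u _ => ?_)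
  simp only [add_sub_cancel_right]

end Gg

end VFP

set_option maxHeartbeats 4000000 in
open VFP in
/-- **Existence of a fixed point solving the Volterra integral system (4.19)–(4.20).**
There is a constant `K > 0` depending only on `μ, k, q, S_in` such that for every
admissible `(f₀, S₀, D)` and every
`δ ∈ (0, min(S₀,S_in−S₀)/(2K·S_in·(‖f₀‖_{L¹} + ess sup_{[0,1]} D + 1))]`, the operator
`T = (T₁,T₂)` is a contraction on `B_R` (with `R = min(S₀,S_in−S₀)/2`, contraction in
the `H`-norm `‖(y,z)‖_H = ‖y‖_∞ + ‖z‖_∞`) and admits a fixed point `(y,z) ∈ B_R`, i.e.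
`y(t) = T₁(y,z)(t)` and `z(t) = T₂(y,z)(t)` for all `t ∈ [0,δ]`. -/
theorem fixed_point_existence_for_volterra_system
    (μ μ' β k q : ℝ → ℝ) (S_in : ℝ) (hmodel : ModelHyp μ β k q S_in)
    (hμ' : ∀ s, 0 ≤ s → HasDerivAt μ (μ' s) s) (hμ'c : ContinuousOn μ' (Ici 0)) :
    ∃ K, 0 < K ∧
      ∀ f₀ : ℝ → ℝ, ContinuousOn f₀ (Ici 0) → (∀ a, 0 ≤ a → 0 < f₀ a) →
        IntegrableOn f₀ (Ioi 0) →
      ∀ S₀ ∈ Ioo 0 S_in, ∀ D, AdmissibleInput D →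
      ∀ δ, 0 < δ →
        δ ≤ min S₀ (S_in - S₀)
            / (2 * K * S_in * ((∫ a in Ioi (0:ℝ), |f₀ a|)
                + essSup D (volume.restrict (Icc (0:ℝ) 1)) + 1)) →
        (∃ c, 0 ≤ c ∧ c < 1 ∧
          ∀ y₁ z₁ y₂ z₂, MemBR δ (min S₀ (S_in - S₀) / 2) y₁ z₁ →
            MemBR δ (min S₀ (S_in - S₀) / 2) y₂ z₂ →
            ∀ Ey Ez, (∀ t ∈ Icc 0 δ, |y₁ t - y₂ t| ≤ Ey) →
              (∀ t ∈ Icc 0 δ, |z₁ t - z₂ t| ≤ Ez) →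
              ∀ t₁ ∈ Icc 0 δ, ∀ t₂ ∈ Icc 0 δ,
                |T1op μ k β f₀ S₀ y₁ z₁ t₁ - T1op μ k β f₀ S₀ y₂ z₂ t₁|
                  + |T2op μ k q β f₀ D S_in S₀ y₁ z₁ t₂
                      - T2op μ k q β f₀ D S_in S₀ y₂ z₂ t₂|
                ≤ c * (Ey + Ez)) ∧
        (∃ y z, MemBR δ (min S₀ (S_in - S₀) / 2) y z ∧
          ∀ t ∈ Icc 0 δ,
            y t = T1op μ k β f₀ S₀ y z t ∧
            z t = T2op μ k q β f₀ D S_in S₀ y z t) := by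
  obtain ⟨hμc, hμ0, ⟨M₀, hM₀⟩, hμd, hμzero, hμpos, hβc, hβ0, ⟨Cβ₀, hCβ₀⟩,
    hkc, hk0, ⟨Ck₀, hCk₀⟩, hqc, hq0, ⟨Cq₀, hCq₀⟩, hkL, hqL, hSin⟩ := hmodel
  clear hμd hμzero hμpos hkL hqL
  set M := max M₀ 0 with hMdef
  set Ck := max Ck₀ 0 with hCkdef
  set Cq := max Cq₀ 0 with hCqdef
  set Cβ := max Cβ₀ 0 with hCβdef
  have hM : ∀ s, 0 ≤ s → μ s ≤ M := fun s hs => (hM₀ s hs).trans (le_max_left _ _)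
  have hCk : ∀ s, 0 ≤ s → k s ≤ Ck := fun s hs => (hCk₀ s hs).trans (le_max_left _ _)
  have hCq : ∀ s, 0 ≤ s → q s ≤ Cq := fun s hs => (hCq₀ s hs).trans (le_max_left _ _)
  have hCβ : ∀ s, 0 ≤ s → β s ≤ Cβ := fun s hs => (hCβ₀ s hs).trans (le_max_left _ _)
  clear_value M Ck Cq Cβ
  have hM0 : (0:ℝ) ≤ M := hMdef ▸ le_max_right _ _
  have hCk0 : (0:ℝ) ≤ Ck := hCkdef ▸ le_max_right _ _
  have hCq0 : (0:ℝ) ≤ Cq := hCqdef ▸ le_max_right _ _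
  -- Lipschitz bound for μ on [0, S_in]
  obtain ⟨L₀, hL₀⟩ := (isCompact_Icc (a := (0:ℝ)) (b := S_in)).exists_bound_of_continuousOn
    (hμ'c.mono Icc_subset_Ici_self)
  set L := max L₀ 0 with hLdef
  clear_value L
  have hL0 : (0:ℝ) ≤ L := hLdef ▸ le_max_right _ _
  have hLb : ∀ x ∈ Icc (0:ℝ) S_in, |μ' x| ≤ L := by
    intro x hx
    have h := hL₀ x hx
    rw [Real.norm_eq_abs] at h
    exact h.trans (hLdef ▸ le_max_left L₀ 0)
  have hLip : ∀ a ∈ Icc (0:ℝ) S_in, ∀ b ∈ Icc (0:ℝ) S_in, |μ a - μ b| ≤ L * |a - b| := by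
    have hlip : LipschitzOnWith (Real.toNNReal L) μ (Icc 0 S_in) := by
      apply (convex_Icc (0:ℝ) S_in).lipschitzOnWith_of_nnnorm_hasDerivWithin_le
        (f' := μ') (fun x hx => (hμ' x hx.1).hasDerivWithinAt)
      intro x hx
      rw [← NNReal.coe_le_coe, coe_nnnorm, Real.norm_eq_abs, Real.coe_toNNReal _ hL0]
      exact hLb x hx
    intro a ha b hb
    have h := hlip.dist_le_mul a ha b hb
    rw [Real.dist_eq, Real.dist_eq, Real.coe_toNNReal _ hL0] at h
    exact h
  -- the constants
  set A1 : ℝ := Ck * M + M * (Cq * M) with hA1def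
  set A2 : ℝ := L * (Ck + 2 * (Cq * M)) * S_in with hA2def
  set A3 : ℝ := L * ((Ck + 2 * (Cq * M)) * Ck + Cq) with hA3def
  set B1 : ℝ := Ck * M * S_in + M * (Cq * M) * S_in with hB1def
  set B2 : ℝ := Ck * M * Ck + M * Cq + M * (Cq * M) * Ck with hB2def
  clear_value A1 A2 A3 B1 B2
  have hA10 : 0 ≤ A1 := by rw [hA1def]; positivity
  have hA20 : 0 ≤ A2 := by rw [hA2def]; positivity
  have hA30 : 0 ≤ A3 := by rw [hA3def]; positivity
  have hB10 : 0 ≤ B1 := by rw [hB1def]; positivity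
  have hB20 : 0 ≤ B2 := by rw [hB2def]; positivity
  set K : ℝ := 1 + A1 + A2 + A3 + (B1 + B2) / S_in with hKdef
  clear_value K
  have hBS : 0 ≤ (B1 + B2) / S_in := by positivity
  have hK1 : 1 ≤ K := by rw [hKdef]; linarith
  have hK0 : 0 < K := by linarith
  refine ⟨K, hK0, ?_⟩
  intro f₀ hf₀c hf₀pos hf₀i S₀ hS₀ D hD δ hδ0 hδle
  set P := ∫ a in Ioi (0:ℝ), |f₀ a| with hPdef
  set E := essSup D (volume.restrict (Icc (0:ℝ) 1)) with hEdef
  set R := min S₀ (S_in - S₀) / 2 with hRdef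
  clear_value P E R
  obtain ⟨hS₀0, hS₀S⟩ := hS₀
  have h2R : min S₀ (S_in - S₀) = 2 * R := by rw [hRdef]; ring
  have hR0 : 0 < R := by
    have := lt_min hS₀0 (by linarith : (0:ℝ) < S_in - S₀)
    rw [h2R] at this; linarith
  have hRa : 2 * R ≤ S₀ := by rw [← h2R]; exact min_le_left _ _
  have hRb : 2 * R ≤ S_in - S₀ := by rw [← h2R]; exact min_le_right _ _
  have hR4 : 4 * R ≤ S_in := by linarith
  have hRle : R ≤ S_in / 4 := by linarith
  have hP0 : 0 ≤ P := hPdef ▸ (integral_nonneg fun a => abs_nonneg _ : (0:ℝ) ≤ ∫ a in Ioi (0:ℝ), |f₀ a|)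
  -- essSup facts
  haveI hne : NeZero (volume.restrict (Icc (0:ℝ) 1)) := by
    constructor
    rw [Ne, Measure.restrict_eq_zero]
    simp [Real.volume_Icc]
  obtain ⟨C₁, hC₁⟩ := hD.2.2 1 one_pos
  have hbddD : IsBoundedUnder (· ≤ ·) (ae (volume.restrict (Icc (0:ℝ) 1))) D :=
    ⟨C₁, eventually_map.2 ((ae_restrict_iff' measurableSet_Icc).2 (ae_of_all _ hC₁))⟩
  have hDleE : ∀ᵐ x ∂(volume.restrict (Icc (0:ℝ) 1)), D x ≤ E := hEdef ▸ ae_le_essSup hbddD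
  have hDae0 : ∀ᵐ x ∂(volume.restrict (Icc (0:ℝ) 1)), 0 ≤ D x :=
    (ae_restrict_iff' measurableSet_Icc).2 (ae_of_all _ (fun x hx => hD.2.1 x hx.1))
  have hE0 : 0 ≤ E := by
    haveI : (ae (volume.restrict (Icc (0:ℝ) 1))).NeBot := ae_neBot.2 hne.out
    obtain ⟨x, h1, h2⟩ := (hDleE.and hDae0).exists
    linarith
  have hPE1 : 1 ≤ P + E + 1 := by linarith
  -- the smallness consequences of hδle
  have hden : 0 < 2 * K * S_in * (P + E + 1) :=
    mul_pos (mul_pos (mul_pos two_pos hK0) hSin) (by linarith)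
  have hKSpos : 0 < K * S_in := mul_pos hK0 hSin
  have hδK : δ * (K * S_in * (P + E + 1)) ≤ R := by
    rw [h2R] at hδle
    have h1 := (le_div_iff₀ hden).1 hδle
    have h2 : δ * (2 * K * S_in * (P + E + 1)) = 2 * (δ * (K * S_in * (P + E + 1))) := by ring
    linarith
  have hKS : S_in ≤ K * S_in * (P + E + 1) := by
    have e1 : S_in ≤ K * S_in := le_mul_of_one_le_left hSin.le hK1
    have e2 : K * S_in ≤ K * S_in * (P + E + 1) := le_mul_of_one_le_right hKSpos.le hPE1
    linarith
  have hδ1 : δ ≤ 1 := by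
    have h2 : δ * S_in ≤ δ * (K * S_in * (P + E + 1)) := mul_le_mul_of_nonneg_left hKS hδ0.le
    have h3 : δ * S_in ≤ S_in / 4 := by linarith
    have h4 : δ ≤ S_in / 4 / S_in := (le_div_iff₀ hSin).2 h3
    have h5 : S_in / 4 / S_in = 1 / 4 := by field_simp
    linarith
  have hKSB : B1 + B2 ≤ K * S_in := by
    have hKSe : K * S_in = S_in * (1 + A1 + A2 + A3) + (B1 + B2) := by
      calc K * S_in = (1 + A1 + A2 + A3) * S_in + (B1 + B2) / S_in * S_in := by
            rw [hKdef]; ring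
        _ = S_in * (1 + A1 + A2 + A3) + (B1 + B2) := by
            rw [div_mul_cancel₀ _ hSin.ne']; ring
    have h6 : 0 ≤ S_in * (1 + A1 + A2 + A3) := mul_nonneg hSin.le (by linarith)
    linarith
  have hδself : δ * (B1 + B2 * P + S_in * E) ≤ R := by
    have h1 : B1 + B2 * P + S_in * E ≤ K * S_in * (P + E + 1) := by
      have e1 : B1 ≤ K * S_in := by linarith
      have e2 : B2 * P ≤ K * S_in * P := mul_le_mul_of_nonneg_right (by linarith) hP0
      have e3 : S_in * E ≤ K * S_in * E :=
        mul_le_mul_of_nonneg_right (le_mul_of_one_le_left hSin.le hK1) hE0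
      have expand : K * S_in * (P + E + 1) = K * S_in * P + K * S_in * E + K * S_in := by ring
      linarith
    calc δ * (B1 + B2 * P + S_in * E) ≤ δ * (K * S_in * (P + E + 1)) :=
          mul_le_mul_of_nonneg_left h1 hδ0.le
      _ ≤ R := hδK
  have hδcontr : δ * (A1 + (A2 + A3 * P)) ≤ 1 / 4 := by
    have e0 : A1 + A2 + A3 ≤ K := by rw [hKdef]; linarith
    have h1 : A1 + (A2 + A3 * P) ≤ K * (P + E + 1) := by
      have e1 : A1 + (A2 + A3 * P) ≤ (A1 + A2 + A3) * (P + E + 1) := by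
        have expand : (A1 + A2 + A3) * (P + E + 1)
            = A1 * P + A1 * E + A1 + A2 * P + A2 * E + A2 + A3 * P + A3 * E + A3 := by ring
        linarith [mul_nonneg hA10 hP0, mul_nonneg hA10 hE0, mul_nonneg hA20 hP0,
          mul_nonneg hA20 hE0, mul_nonneg hA30 hE0]
      have e2 : (A1 + A2 + A3) * (P + E + 1) ≤ K * (P + E + 1) :=
        mul_le_mul_of_nonneg_right e0 (by linarith)
      linarith
    have h2 : δ * (A1 + (A2 + A3 * P)) ≤ δ * (K * (P + E + 1)) :=
      mul_le_mul_of_nonneg_left h1 hδ0.le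
    have h3 : δ * (K * (P + E + 1)) * S_in ≤ S_in / 4 := by
      have : δ * (K * (P + E + 1)) * S_in = δ * (K * S_in * (P + E + 1)) := by ring
      linarith
    have h4 : δ * (K * (P + E + 1)) ≤ S_in / 4 / S_in := (le_div_iff₀ hSin).2 h3
    have h5 : S_in / 4 / S_in = 1 / 4 := by field_simp
    linarith
  -- ## smoothed kernels and their properties
  have hBc : Continuous (VFP.Bf β) := VFP.Bf_cont hβc hβ0 hCβ
  have hB0 : ∀ x, 0 ≤ VFP.Bf β x := VFP.Bf_nonneg hβ0
  set gG : ℝ → ℝ := VFP.Gg k β f₀ with hgGdef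
  set hG : ℝ → ℝ := VFP.Gg q β f₀ with hhGdef
  have hgGc : Continuous gG := VFP.Gg_cont hβc hβ0 hCβ hkc hk0 hCk hf₀c hf₀i
  have hhGc : Continuous hG := VFP.Gg_cont hβc hβ0 hCβ hqc hq0 hCq hf₀c hf₀i
  have hgGb : ∀ t, |gG t| ≤ Ck * P := by
    intro t; rw [hgGdef, hPdef]
    exact VFP.Gg_bound hβc hβ0 hCβ hkc hk0 hCk hf₀c hf₀i t
  have hhGb : ∀ t, |hG t| ≤ Cq * P := by
    intro t; rw [hhGdef, hPdef]
    exact VFP.Gg_bound hβc hβ0 hCβ hqc hq0 hCq hf₀c hf₀i t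
  have hgGe : ∀ t : ℝ, 0 ≤ t → kernelInt k β f₀ t = gG t := fun t ht =>
    VFP.Gg_eq hβc hβ0 hCβ hkc hk0 hCk hf₀c hf₀i ht
  have hhGe : ∀ t : ℝ, 0 ≤ t → kernelInt q β f₀ t = hG t := fun t ht =>
    VFP.Gg_eq hβc hβ0 hCβ hqc hq0 hCq hf₀c hf₀i ht
  clear_value gG hG
  set kD : ℝ → ℝ := fun a => k (max a 0) * Real.exp (-(VFP.Bf β a)) with hkDdef
  set qD : ℝ → ℝ := fun a => q (max a 0) * Real.exp (-(VFP.Bf β a)) with hqDdef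
  have hmaxc : Continuous fun a : ℝ => max a 0 := continuous_id.max continuous_const
  have hkDc : Continuous kD := by
    rw [hkDdef]
    exact (hkc.comp_continuous hmaxc (fun a => le_max_right a 0)).mul
      (Real.continuous_exp.comp hBc.neg)
  have hqDc : Continuous qD := by
    rw [hqDdef]
    exact (hqc.comp_continuous hmaxc (fun a => le_max_right a 0)).mul
      (Real.continuous_exp.comp hBc.neg)
  have hkD0 : ∀ a, 0 ≤ kD a := fun a =>
    mul_nonneg (hk0 _ (le_max_right a 0)) (Real.exp_pos _).le
  have hqD0 : ∀ a, 0 ≤ qD a := fun a =>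
    mul_nonneg (hq0 _ (le_max_right a 0)) (Real.exp_pos _).le
  have hexp1 : ∀ a : ℝ, Real.exp (-(VFP.Bf β a)) ≤ 1 := fun a =>
    Real.exp_le_one_iff.2 (neg_nonpos.2 (hB0 a))
  have hkDb : ∀ a, kD a ≤ Ck := fun a => by
    calc kD a ≤ Ck * 1 := mul_le_mul (hCk _ (le_max_right a 0)) (hexp1 a)
          (Real.exp_pos _).le hCk0
      _ = Ck := mul_one _
  have hqDb : ∀ a, qD a ≤ Cq := fun a => by
    calc qD a ≤ Cq * 1 := mul_le_mul (hCq _ (le_max_right a 0)) (hexp1 a)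
          (Real.exp_pos _).le hCq0
      _ = Cq := mul_one _
  have hkDeq : ∀ a : ℝ, 0 ≤ a → discounted k β a = kD a := fun a ha => by
    rw [hkDdef]; simp only [discounted, VFP.Bf, max_eq_left ha]
  have hqDeq : ∀ a : ℝ, 0 ≤ a → discounted q β a = qD a := fun a ha => by
    rw [hqDdef]; simp only [discounted, VFP.Bf, max_eq_left ha]
  clear_value kD qD
  -- ## Properties of μ on the relevant range
  have hargmem : ∀ v : ℝ, |v| ≤ R → (v + S₀) ∈ Icc (0:ℝ) S_in := by
    intro v hv
    obtain ⟨h1, h2⟩ := abs_le.1 hv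
    exact ⟨by linarith, by linarith⟩
  have hμM : ∀ v : ℝ, |v| ≤ R → 0 ≤ μ (v + S₀) ∧ μ (v + S₀) ≤ M := fun v hv =>
    ⟨hμ0 _ (hargmem v hv).1, hM _ (hargmem v hv).1⟩
  have hμdiff : ∀ v w : ℝ, |v| ≤ R → |w| ≤ R → |μ (v + S₀) - μ (w + S₀)| ≤ L * |v - w| := by
    intro v w hv hw
    have h := hLip _ (hargmem v hv) _ (hargmem w hw)
    simpa using h
  have hμcomp : ∀ z : ℝ → ℝ, Continuous z → (∀ s, |z s| ≤ R) →
      Continuous fun s => μ (z s + S₀) := fun z hzc hzb =>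
    hμc.comp_continuous (hzc.add continuous_const) (fun s => (hargmem _ (hzb s)).1)
  -- ## elementary bound helpers
  have habs3 : ∀ x1 x2 x3 b1 b2 b3 : ℝ, |x1| ≤ b1 → |x2| ≤ b2 → |x3| ≤ b3 →
      |x1 * x2 * x3| ≤ b1 * b2 * b3 := by
    intro x1 x2 x3 b1 b2 b3 h1 h2 h3
    have n1 := (abs_nonneg x1).trans h1
    have n2 := (abs_nonneg x2).trans h2
    rw [abs_mul, abs_mul]
    exact mul_le_mul (mul_le_mul h1 h2 (abs_nonneg _) n1) h3 (abs_nonneg _) (mul_nonneg n1 n2)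
  have hIntBd : ∀ (F : ℝ → ℝ) (C t : ℝ), 0 ≤ t → (∀ a ∈ Set.uIoc (0:ℝ) t, |F a| ≤ C) →
      |∫ a in (0:ℝ)..t, F a| ≤ C * t := by
    intro F C t ht hF
    have h := intervalIntegral.norm_integral_le_of_norm_le_const (a := 0) (b := t) (C := C)
      (f := F) (fun x hx => by rw [Real.norm_eq_abs]; exact hF x hx)
    rwa [Real.norm_eq_abs, sub_zero, abs_of_nonneg ht] at h
  -- ## properties of the input term b
  obtain ⟨C₂, hC₂⟩ := hD.2.2 δ hδ0
  have hDb : ∀ t ∈ Icc (0:ℝ) δ, |D t| ≤ max C₂ 0 := fun t ht => by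
    rw [abs_of_nonneg (hD.2.1 t ht.1)]
    exact (hC₂ t ht).trans (le_max_left _ _)
  have hDint : IntegrableOn D (Icc (0:ℝ) δ) := by
    apply Measure.integrableOn_of_bounded (M := max C₂ 0)
      (isCompact_Icc.measure_lt_top).ne hD.1.aestronglyMeasurable
    exact (ae_restrict_iff' measurableSet_Icc).2 (ae_of_all _
      (fun t ht => by rw [Real.norm_eq_abs]; exact hDb t ht))
  have hbnn : ∀ t ∈ Icc (0:ℝ) δ, 0 ≤ ∫ s in (0:ℝ)..t, D s := fun t ht =>
    intervalIntegral.integral_nonneg ht.1 (fun u hu => hD.2.1 u hu.1)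
  have hb01 : ∀ t ∈ Icc (0:ℝ) δ, 0 < bInput D t ∧ bInput D t ≤ 1 := fun t ht =>
    ⟨Real.exp_pos _, Real.exp_le_one_iff.2 (neg_nonpos.2 (hbnn t ht))⟩
  have hbE : ∀ t ∈ Icc (0:ℝ) δ, 0 ≤ 1 - bInput D t ∧ 1 - bInput D t ≤ E * δ := by
    intro t ht
    refine ⟨by linarith [(hb01 t ht).2], ?_⟩
    have h1 : 1 - bInput D t ≤ ∫ s in (0:ℝ)..t, D s := by
      have h := Real.add_one_le_exp (-(∫ s in (0:ℝ)..t, D s))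
      have : bInput D t = Real.exp (-(∫ s in (0:ℝ)..t, D s)) := rfl
      linarith
    have h2 : (∫ s in (0:ℝ)..t, D s) ≤ E * t := by
      rw [intervalIntegral.integral_of_le ht.1]
      have hsub : Ioc (0:ℝ) t ⊆ Icc (0:ℝ) 1 := fun x hx =>
        ⟨hx.1.le, le_trans hx.2 (le_trans ht.2 hδ1)⟩
      have hmono : ∀ᵐ x ∂(volume.restrict (Ioc (0:ℝ) t)), D x ≤ E :=
        ae_mono (Measure.restrict_mono hsub le_rfl) hDleE
      have hDi : IntegrableOn D (Ioc (0:ℝ) t) :=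
        hDint.mono_set (fun x hx => ⟨hx.1.le, hx.2.trans ht.2⟩)
      calc (∫ x in Ioc (0:ℝ) t, D x) ≤ ∫ _x in Ioc (0:ℝ) t, E := by
            apply integral_mono_ae hDi (integrableOn_const measure_Ioc_lt_top.ne) hmono
        _ = E * t := by
            rw [setIntegral_const, measureReal_def, Real.volume_Ioc, smul_eq_mul,
              ENNReal.toReal_ofReal (by linarith [ht.1] : (0:ℝ) ≤ t - 0)]
            ring
    have h3 : E * t ≤ E * δ := mul_le_mul_of_nonneg_left ht.2 hE0
    linarith
  have hbcont : ContinuousOn (bInput D) (Icc 0 δ) := by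
    have hPc : ContinuousOn (fun x => ∫ s in (0:ℝ)..x, D s) (Icc 0 δ) := by
      have h := intervalIntegral.continuousOn_primitive_interval
        (a := (0:ℝ)) (b := δ) (μ := volume) (f := D)
        (by rwa [uIcc_of_le hδ0.le])
      rwa [uIcc_of_le hδ0.le] at h
    exact Real.continuous_exp.comp_continuousOn hPc.neg
  -- ## the common integrand machinery
  set IH : (ℝ → ℝ) → (ℝ → ℝ) → (ℝ → ℝ) → ℝ → ℝ → ℝ :=
    fun w' y z t a => w' a * μ (z (t - a) + S₀) * (y (t - a) + gG (t - a)) with hIHdef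
  clear_value IH
  have hIHcont : ∀ w' y z : ℝ → ℝ, Continuous w' → Continuous y → Continuous z →
      (∀ s, |z s| ≤ R) → Continuous fun p : ℝ × ℝ => IH w' y z p.1 p.2 := by
    intro w' y z hw' hy hz hzb
    simp only [hIHdef]
    have hsub : Continuous fun p : ℝ × ℝ => p.1 - p.2 := continuous_fst.sub continuous_snd
    exact ((hw'.comp continuous_snd).mul ((hμcomp z hz hzb).comp hsub)).mul
      ((hy.comp hsub).add (hgGc.comp hsub))
  have hIHparam : ∀ w' y z : ℝ → ℝ, Continuous w' → Continuous y → Continuous z →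
      (∀ s, |z s| ≤ R) → Continuous fun t => ∫ a in (0:ℝ)..t, IH w' y z t a := by
    intro w' y z hw' hy hz hzb
    exact intervalIntegral.continuous_parametric_intervalIntegral_of_continuous
      (f := fun t a => IH w' y z t a) (μ := volume) (hIHcont w' y z hw' hy hz hzb)
      continuous_id
  set W : ℝ := S_in + Ck * P with hWdef
  have hW0 : 0 ≤ W := by rw [hWdef]; have := mul_nonneg hCk0 hP0; linarith
  clear_value W
  have hIHbd : ∀ (w' : ℝ → ℝ) (Cw' : ℝ) (y z : ℝ → ℝ), (∀ a, 0 ≤ w' a) → (∀ a, w' a ≤ Cw') →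
      (∀ s, |y s| ≤ R) → (∀ s, |z s| ≤ R) →
      ∀ t a, |IH w' y z t a| ≤ Cw' * (M * W) := by
    intro w' Cw' y z hw'0 hw'b hyb hzb t a
    simp only [hIHdef]
    have h := habs3 (w' a) (μ (z (t - a) + S₀)) (y (t - a) + gG (t - a)) Cw' M W
      (by rw [abs_of_nonneg (hw'0 a)]; exact hw'b a)
      (by rw [abs_of_nonneg (hμM _ (hzb _)).1]; exact (hμM _ (hzb _)).2)
      (by
        calc |y (t-a) + gG (t-a)| ≤ |y (t-a)| + |gG (t-a)| := abs_add_le _ _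
          _ ≤ R + Ck * P := add_le_add (hyb _) (hgGb _)
          _ ≤ W := by rw [hWdef]; linarith)
    calc |w' a * μ (z (t - a) + S₀) * (y (t - a) + gG (t - a))| ≤ Cw' * M * W := h
      _ = Cw' * (M * W) := by ring
  have hIHdiffbd : ∀ (w' : ℝ → ℝ) (Cw' : ℝ) (y₁ z₁ y₂ z₂ : ℝ → ℝ) (Ey Ez : ℝ),
      (∀ a, 0 ≤ w' a) → (∀ a, w' a ≤ Cw') →
      (∀ s, |y₁ s| ≤ R) → (∀ s, |z₁ s| ≤ R) → (∀ s, |y₂ s| ≤ R) → (∀ s, |z₂ s| ≤ R) →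
      (∀ s, |y₁ s - y₂ s| ≤ Ey) → (∀ s, |z₁ s - z₂ s| ≤ Ez) →
      ∀ t a, |IH w' y₁ z₁ t a - IH w' y₂ z₂ t a| ≤ Cw' * (L * W * Ez + M * Ey) := by
    intro w' Cw' y₁ z₁ y₂ z₂ Ey Ez hw'0 hw'b hy1 hz1 hy2 hz2 hEy hEz t a
    have hCw'0 : 0 ≤ Cw' := (hw'0 a).trans (hw'b a)
    have hEy0 : 0 ≤ Ey := (abs_nonneg _).trans (hEy 0)
    have hEz0 : 0 ≤ Ez := (abs_nonneg _).trans (hEz 0)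
    have key : IH w' y₁ z₁ t a - IH w' y₂ z₂ t a
        = w' a * ((μ (z₁ (t-a) + S₀) - μ (z₂ (t-a) + S₀)) * (y₁ (t-a) + gG (t-a))
          + μ (z₂ (t-a) + S₀) * (y₁ (t-a) - y₂ (t-a))) := by
      simp only [hIHdef]; ring
    rw [key, abs_mul]
    have hw : |w' a| ≤ Cw' := by rw [abs_of_nonneg (hw'0 a)]; exact hw'b a
    have hA : |(μ (z₁ (t-a) + S₀) - μ (z₂ (t-a) + S₀)) * (y₁ (t-a) + gG (t-a))|
        ≤ L * W * Ez := by
      rw [abs_mul]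
      have h1 : |μ (z₁ (t-a) + S₀) - μ (z₂ (t-a) + S₀)| ≤ L * Ez := by
        calc |μ (z₁ (t-a) + S₀) - μ (z₂ (t-a) + S₀)| ≤ L * |z₁ (t-a) - z₂ (t-a)| :=
              hμdiff _ _ (hz1 _) (hz2 _)
          _ ≤ L * Ez := mul_le_mul_of_nonneg_left (hEz _) hL0
      have h2 : |y₁ (t-a) + gG (t-a)| ≤ W := by
        calc |y₁ (t-a) + gG (t-a)| ≤ |y₁ (t-a)| + |gG (t-a)| := abs_add_le _ _
          _ ≤ R + Ck * P := add_le_add (hy1 _) (hgGb _)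
          _ ≤ W := by rw [hWdef]; linarith
      have h3 := mul_le_mul h1 h2 (abs_nonneg _) (mul_nonneg hL0 hEz0)
      have heq : L * Ez * W = L * W * Ez := by ring
      linarith
    have hB : |μ (z₂ (t-a) + S₀) * (y₁ (t-a) - y₂ (t-a))| ≤ M * Ey := by
      rw [abs_mul]
      exact mul_le_mul (by rw [abs_of_nonneg (hμM _ (hz2 _)).1]; exact (hμM _ (hz2 _)).2)
        (hEy _) (abs_nonneg _) hM0
    exact mul_le_mul hw (le_trans (abs_add_le _ _) (add_le_add hA hB)) (abs_nonneg _) hCw'0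
  -- ## rewriting the operators via the smoothed data
  have hT1eq : ∀ (y z : ℝ → ℝ) (t : ℝ), t ∈ Icc (0:ℝ) δ →
      T1op μ k β f₀ S₀ y z t = ∫ a in (0:ℝ)..t, IH kD y z t a := by
    intro y z t ht
    simp only [T1op]
    apply intervalIntegral.integral_congr
    intro a ha
    rw [uIcc_of_le ht.1] at ha
    have h2 : (0:ℝ) ≤ t - a := by linarith [ha.2]
    simp only [hIHdef]
    rw [hkDeq a ha.1, hgGe _ h2]
  have hT2eq : ∀ (y z : ℝ → ℝ) (t : ℝ), t ∈ Icc (0:ℝ) δ →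
      T2op μ k q β f₀ D S_in S₀ y z t
        = (S_in - S₀) * (1 - bInput D t)
          - bInput D t * (∫ τ in (0:ℝ)..t, μ (z τ + S₀) * hG τ)
          - bInput D t * ∫ τ in (0:ℝ)..t, μ (z τ + S₀) * ∫ a in (0:ℝ)..τ, IH qD y z τ a := by
    intro y z t ht
    simp only [T2op]
    have e1 : (∫ τ in (0:ℝ)..t, μ (z τ + S₀) * kernelInt q β f₀ τ)
        = ∫ τ in (0:ℝ)..t, μ (z τ + S₀) * hG τ := by
      apply intervalIntegral.integral_congr
      intro τ hτ
      rw [uIcc_of_le ht.1] at hτ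
      dsimp only
      rw [hhGe τ hτ.1]
    have e2 : (∫ τ in (0:ℝ)..t, μ (z τ + S₀) * ∫ a in (0:ℝ)..τ,
          discounted q β a * μ (z (τ - a) + S₀) * (y (τ - a) + kernelInt k β f₀ (τ - a)))
        = ∫ τ in (0:ℝ)..t, μ (z τ + S₀) * ∫ a in (0:ℝ)..τ, IH qD y z τ a := by
      apply intervalIntegral.integral_congr
      intro τ hτ
      rw [uIcc_of_le ht.1] at hτ
      dsimp only
      have e3 : (∫ a in (0:ℝ)..τ,
            discounted q β a * μ (z (τ - a) + S₀) * (y (τ - a) + kernelInt k β f₀ (τ - a)))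
          = ∫ a in (0:ℝ)..τ, IH qD y z τ a := by
        apply intervalIntegral.integral_congr
        intro a ha
        rw [uIcc_of_le hτ.1] at ha
        have h2 : (0:ℝ) ≤ τ - a := by linarith [ha.2]
        simp only [hIHdef]
        rw [hqDeq a ha.1, hgGe _ h2]
      rw [e3]
    rw [e1, e2]
  -- ## continuity of the operator components (smoothed form)
  have hJ1c : ∀ z : ℝ → ℝ, Continuous z → (∀ s, |z s| ≤ R) →
      Continuous fun t => ∫ τ in (0:ℝ)..t, μ (z τ + S₀) * hG τ := by
    intro z hz hzb
    exact intervalIntegral.continuous_parametric_intervalIntegral_of_continuous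
      (f := fun _ τ => μ (z τ + S₀) * hG τ) (μ := volume)
      (((hμcomp z hz hzb).mul hhGc).comp continuous_snd) continuous_id
  have hJ2c : ∀ y z : ℝ → ℝ, Continuous y → Continuous z → (∀ s, |z s| ≤ R) →
      Continuous fun t => ∫ τ in (0:ℝ)..t, μ (z τ + S₀) * ∫ a in (0:ℝ)..τ, IH qD y z τ a := by
    intro y z hy hz hzb
    have hin : Continuous fun τ => ∫ a in (0:ℝ)..τ, IH qD y z τ a :=
      hIHparam qD y z hqDc hy hz hzb
    exact intervalIntegral.continuous_parametric_intervalIntegral_of_continuous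
      (f := fun _ τ => μ (z τ + S₀) * ∫ a in (0:ℝ)..τ, IH qD y z τ a) (μ := volume)
      (((hμcomp z hz hzb).mul hin).comp continuous_snd) continuous_id
  -- ## nonnegativity collection
  have hCMW : 0 ≤ Cq * (M * W) := mul_nonneg hCq0 (mul_nonneg hM0 hW0)
  have hCkMW : 0 ≤ Ck * (M * W) := mul_nonneg hCk0 (mul_nonneg hM0 hW0)
  have habc : ∀ A B C : ℝ, |A - B - C| ≤ |A| + |B| + |C| := by
    intro A B C
    have h1 : |A - B - C| ≤ |A - B| + |C| := by
      have := abs_add_le (A - B) (-C); simpa [sub_eq_add_neg] using this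
    have h2 : |A - B| ≤ |A| + |B| := by
      have := abs_add_le A (-B); simpa [sub_eq_add_neg] using this
    linarith
  -- ## inner integral bounds
  have hInnerBd : ∀ y z : ℝ → ℝ, (∀ s, |y s| ≤ R) → (∀ s, |z s| ≤ R) →
      ∀ τ : ℝ, 0 ≤ τ → τ ≤ δ → |∫ a in (0:ℝ)..τ, IH qD y z τ a| ≤ Cq * (M * W) * δ := by
    intro y z hyb hzb τ h0 h1
    calc |∫ a in (0:ℝ)..τ, IH qD y z τ a| ≤ Cq * (M * W) * τ :=
          hIntBd _ _ τ h0 (fun a _ => hIHbd qD Cq y z hqD0 hqDb hyb hzb τ a)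
      _ ≤ Cq * (M * W) * δ := mul_le_mul_of_nonneg_left h1 hCMW
  -- ## the self-map estimate
  have hSelf : ∀ y z : ℝ → ℝ, (∀ s, |y s| ≤ R) → (∀ s, |z s| ≤ R) →
      ∀ t₁ ∈ Icc (0:ℝ) δ, ∀ t₂ ∈ Icc (0:ℝ) δ,
        |T1op μ k β f₀ S₀ y z t₁| + |T2op μ k q β f₀ D S_in S₀ y z t₂| ≤ R := by
    intro y z hyb hzb t₁ ht₁ t₂ ht₂
    have e1 : |T1op μ k β f₀ S₀ y z t₁| ≤ Ck * (M * W) * δ := by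
      rw [hT1eq y z t₁ ht₁]
      calc |∫ a in (0:ℝ)..t₁, IH kD y z t₁ a| ≤ Ck * (M * W) * t₁ :=
            hIntBd _ _ t₁ ht₁.1 (fun a _ => hIHbd kD Ck y z hkD0 hkDb hyb hzb t₁ a)
        _ ≤ Ck * (M * W) * δ := mul_le_mul_of_nonneg_left ht₁.2 hCkMW
    have hb := hb01 t₂ ht₂
    have hbe := hbE t₂ ht₂
    have hx1 : |(S_in - S₀) * (1 - bInput D t₂)| ≤ S_in * (E * δ) := by
      rw [abs_mul, abs_of_nonneg (by linarith : (0:ℝ) ≤ S_in - S₀), abs_of_nonneg hbe.1]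
      exact mul_le_mul (by linarith) hbe.2 hbe.1 hSin.le
    have hx2 : |bInput D t₂ * ∫ τ in (0:ℝ)..t₂, μ (z τ + S₀) * hG τ| ≤ M * (Cq * P) * δ := by
      rw [abs_mul, abs_of_pos hb.1]
      have hI : |∫ τ in (0:ℝ)..t₂, μ (z τ + S₀) * hG τ| ≤ M * (Cq * P) * t₂ := by
        apply hIntBd _ _ t₂ ht₂.1
        intro τ _
        rw [abs_mul]
        calc |μ (z τ + S₀)| * |hG τ| ≤ M * (Cq * P) :=
              mul_le_mul (by rw [abs_of_nonneg (hμM _ (hzb _)).1]; exact (hμM _ (hzb _)).2)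
                (hhGb τ) (abs_nonneg _) hM0
          _ = M * (Cq * P) := rfl
      calc bInput D t₂ * |∫ τ in (0:ℝ)..t₂, μ (z τ + S₀) * hG τ|
          ≤ 1 * (M * (Cq * P) * t₂) := mul_le_mul hb.2 hI (abs_nonneg _) one_pos.le
        _ = M * (Cq * P) * t₂ := one_mul _
        _ ≤ M * (Cq * P) * δ := mul_le_mul_of_nonneg_left ht₂.2
            (mul_nonneg hM0 (mul_nonneg hCq0 hP0))
    have hx3 : |bInput D t₂ * ∫ τ in (0:ℝ)..t₂, μ (z τ + S₀) * ∫ a in (0:ℝ)..τ, IH qD y z τ a|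
        ≤ M * (Cq * (M * W) * δ) * δ := by
      rw [abs_mul, abs_of_pos hb.1]
      have hI : |∫ τ in (0:ℝ)..t₂, μ (z τ + S₀) * ∫ a in (0:ℝ)..τ, IH qD y z τ a|
          ≤ M * (Cq * (M * W) * δ) * t₂ := by
        apply hIntBd _ _ t₂ ht₂.1
        intro τ hτ
        rw [uIoc_of_le ht₂.1] at hτ
        rw [abs_mul]
        exact mul_le_mul (by rw [abs_of_nonneg (hμM _ (hzb _)).1]; exact (hμM _ (hzb _)).2)
          (hInnerBd y z hyb hzb τ hτ.1.le (hτ.2.trans ht₂.2)) (abs_nonneg _) hM0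
      calc bInput D t₂ * |∫ τ in (0:ℝ)..t₂, μ (z τ + S₀) * ∫ a in (0:ℝ)..τ, IH qD y z τ a|
          ≤ 1 * (M * (Cq * (M * W) * δ) * t₂) := mul_le_mul hb.2 hI (abs_nonneg _) one_pos.le
        _ = M * (Cq * (M * W) * δ) * t₂ := one_mul _
        _ ≤ M * (Cq * (M * W) * δ) * δ := mul_le_mul_of_nonneg_left ht₂.2
            (mul_nonneg hM0 (mul_nonneg hCMW hδ0.le))
    have e2 : |T2op μ k q β f₀ D S_in S₀ y z t₂|
        ≤ S_in * (E * δ) + M * (Cq * P) * δ + M * (Cq * (M * W) * δ) * δ := by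
      rw [hT2eq y z t₂ ht₂]
      exact le_trans (habc _ _ _) (by linarith)
    -- combine
    have hδδ : δ * δ ≤ δ := mul_le_of_le_one_left hδ0.le hδ1
    have hXnn : 0 ≤ M * (Cq * (M * W)) := mul_nonneg hM0 hCMW
    have hδδX : δ * δ * (M * (Cq * (M * W))) ≤ δ * (M * (Cq * (M * W))) :=
      mul_le_mul_of_nonneg_right hδδ hXnn
    have hexpand : δ * (B1 + B2 * P + S_in * E)
        = Ck * (M * W) * δ + S_in * (E * δ) + M * (Cq * P) * δ + δ * (M * (Cq * (M * W))) := by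
      rw [hB1def, hB2def, hWdef]; ring
    have hee : M * (Cq * (M * W) * δ) * δ = δ * δ * (M * (Cq * (M * W))) := by ring
    linarith [hδself]
  -- ## the contraction estimate
  have hMaster : ∀ y₁ z₁ y₂ z₂ : ℝ → ℝ,
      Continuous y₁ → Continuous z₁ → Continuous y₂ → Continuous z₂ →
      (∀ s, |y₁ s| ≤ R) → (∀ s, |z₁ s| ≤ R) → (∀ s, |y₂ s| ≤ R) → (∀ s, |z₂ s| ≤ R) →
      ∀ Ey Ez : ℝ, (∀ s, |y₁ s - y₂ s| ≤ Ey) → (∀ s, |z₁ s - z₂ s| ≤ Ez) →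
      ∀ t₁ ∈ Icc (0:ℝ) δ, ∀ t₂ ∈ Icc (0:ℝ) δ,
        |T1op μ k β f₀ S₀ y₁ z₁ t₁ - T1op μ k β f₀ S₀ y₂ z₂ t₁|
          + |T2op μ k q β f₀ D S_in S₀ y₁ z₁ t₂ - T2op μ k q β f₀ D S_in S₀ y₂ z₂ t₂|
          ≤ 1 / 4 * (Ey + Ez) := by
    intro y₁ z₁ y₂ z₂ hy₁ hz₁ hy₂ hz₂ hy1b hz1b hy2b hz2b Ey Ez hEy hEz t₁ ht₁ t₂ ht₂
    have hEy0 : 0 ≤ Ey := (abs_nonneg _).trans (hEy 0)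
    have hEz0 : 0 ≤ Ez := (abs_nonneg _).trans (hEz 0)
    have hDk : 0 ≤ Ck * (L * W * Ez + M * Ey) := mul_nonneg hCk0
      (add_nonneg (mul_nonneg (mul_nonneg hL0 hW0) hEz0) (mul_nonneg hM0 hEy0))
    have hDq : 0 ≤ Cq * (L * W * Ez + M * Ey) := mul_nonneg hCq0
      (add_nonneg (mul_nonneg (mul_nonneg hL0 hW0) hEz0) (mul_nonneg hM0 hEy0))
    -- the T1-difference
    have hii : ∀ (w' : ℝ → ℝ) (y z : ℝ → ℝ), Continuous w' → Continuous y → Continuous z →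
        (∀ s, |z s| ≤ R) → ∀ t a b : ℝ, IntervalIntegrable (fun a => IH w' y z t a) volume a b :=
      fun w' y z hw' hy hz hzb t a b =>
        ((hIHcont w' y z hw' hy hz hzb).comp (continuous_const.prodMk continuous_id)
          : Continuous fun a => IH w' y z t a).intervalIntegrable a b
    have eT1 : |T1op μ k β f₀ S₀ y₁ z₁ t₁ - T1op μ k β f₀ S₀ y₂ z₂ t₁|
        ≤ Ck * (L * W * Ez + M * Ey) * δ := by
      rw [hT1eq y₁ z₁ t₁ ht₁, hT1eq y₂ z₂ t₁ ht₁,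
        ← intervalIntegral.integral_sub (hii kD y₁ z₁ hkDc hy₁ hz₁ hz1b t₁ 0 t₁)
          (hii kD y₂ z₂ hkDc hy₂ hz₂ hz2b t₁ 0 t₁)]
      calc |∫ a in (0:ℝ)..t₁, (IH kD y₁ z₁ t₁ a - IH kD y₂ z₂ t₁ a)|
          ≤ Ck * (L * W * Ez + M * Ey) * t₁ := hIntBd _ _ t₁ ht₁.1 (fun a _ =>
            hIHdiffbd kD Ck y₁ z₁ y₂ z₂ Ey Ez hkD0 hkDb hy1b hz1b hy2b hz2b hEy hEz t₁ a)
        _ ≤ Ck * (L * W * Ez + M * Ey) * δ := mul_le_mul_of_nonneg_left ht₁.2 hDk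
    -- the T2-difference
    have hb := hb01 t₂ ht₂
    have hμhc : ∀ z : ℝ → ℝ, Continuous z → (∀ s, |z s| ≤ R) →
        ∀ a b : ℝ, IntervalIntegrable (fun τ => μ (z τ + S₀) * hG τ) volume a b :=
      fun z hz hzb a b => ((hμcomp z hz hzb).mul hhGc).intervalIntegrable a b
    have eJ1 : |(∫ τ in (0:ℝ)..t₂, μ (z₁ τ + S₀) * hG τ)
          - ∫ τ in (0:ℝ)..t₂, μ (z₂ τ + S₀) * hG τ|
        ≤ L * (Cq * P) * Ez * δ := by
      rw [← intervalIntegral.integral_sub (hμhc z₁ hz₁ hz1b 0 t₂) (hμhc z₂ hz₂ hz2b 0 t₂)]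
      have hpt : ∀ τ ∈ Set.uIoc (0:ℝ) t₂,
          |μ (z₁ τ + S₀) * hG τ - μ (z₂ τ + S₀) * hG τ| ≤ L * (Cq * P) * Ez := by
        intro τ _
        have heq : μ (z₁ τ + S₀) * hG τ - μ (z₂ τ + S₀) * hG τ
            = (μ (z₁ τ + S₀) - μ (z₂ τ + S₀)) * hG τ := by ring
        rw [heq, abs_mul]
        have h1 : |μ (z₁ τ + S₀) - μ (z₂ τ + S₀)| ≤ L * Ez := by
          calc |μ (z₁ τ + S₀) - μ (z₂ τ + S₀)| ≤ L * |z₁ τ - z₂ τ| :=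
                hμdiff _ _ (hz1b _) (hz2b _)
            _ ≤ L * Ez := mul_le_mul_of_nonneg_left (hEz _) hL0
        have h2 := mul_le_mul h1 (hhGb τ) (abs_nonneg _) (mul_nonneg hL0 hEz0)
        have heq2 : L * Ez * (Cq * P) = L * (Cq * P) * Ez := by ring
        linarith
      calc |∫ τ in (0:ℝ)..t₂, (μ (z₁ τ + S₀) * hG τ - μ (z₂ τ + S₀) * hG τ)|
          ≤ L * (Cq * P) * Ez * t₂ := hIntBd _ _ t₂ ht₂.1 hpt
        _ ≤ L * (Cq * P) * Ez * δ := mul_le_mul_of_nonneg_left ht₂.2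
            (mul_nonneg (mul_nonneg hL0 (mul_nonneg hCq0 hP0)) hEz0)
    have hμinc : ∀ y z : ℝ → ℝ, Continuous y → Continuous z → (∀ s, |z s| ≤ R) →
        ∀ a b : ℝ, IntervalIntegrable
          (fun τ => μ (z τ + S₀) * ∫ a in (0:ℝ)..τ, IH qD y z τ a) volume a b :=
      fun y z hy hz hzb a b =>
        ((hμcomp z hz hzb).mul (hIHparam qD y z hqDc hy hz hzb)).intervalIntegrable a b
    have eJ2 : |(∫ τ in (0:ℝ)..t₂, μ (z₁ τ + S₀) * ∫ a in (0:ℝ)..τ, IH qD y₁ z₁ τ a)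
          - ∫ τ in (0:ℝ)..t₂, μ (z₂ τ + S₀) * ∫ a in (0:ℝ)..τ, IH qD y₂ z₂ τ a|
        ≤ (L * Ez * (Cq * (M * W) * δ) + M * (Cq * (L * W * Ez + M * Ey) * δ)) * δ := by
      rw [← intervalIntegral.integral_sub (hμinc y₁ z₁ hy₁ hz₁ hz1b 0 t₂)
        (hμinc y₂ z₂ hy₂ hz₂ hz2b 0 t₂)]
      have hptnn : 0 ≤ L * Ez * (Cq * (M * W) * δ) + M * (Cq * (L * W * Ez + M * Ey) * δ) :=
        add_nonneg (mul_nonneg (mul_nonneg hL0 hEz0) (mul_nonneg hCMW hδ0.le))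
          (mul_nonneg hM0 (mul_nonneg hDq hδ0.le))
      have hpt : ∀ τ ∈ Set.uIoc (0:ℝ) t₂,
          |μ (z₁ τ + S₀) * (∫ a in (0:ℝ)..τ, IH qD y₁ z₁ τ a)
            - μ (z₂ τ + S₀) * ∫ a in (0:ℝ)..τ, IH qD y₂ z₂ τ a|
          ≤ L * Ez * (Cq * (M * W) * δ) + M * (Cq * (L * W * Ez + M * Ey) * δ) := by
        intro τ hτ
        rw [uIoc_of_le ht₂.1] at hτ
        have hτ0 : (0:ℝ) ≤ τ := hτ.1.le
        have hτδ : τ ≤ δ := hτ.2.trans ht₂.2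
        have heq : μ (z₁ τ + S₀) * (∫ a in (0:ℝ)..τ, IH qD y₁ z₁ τ a)
              - μ (z₂ τ + S₀) * ∫ a in (0:ℝ)..τ, IH qD y₂ z₂ τ a
            = (μ (z₁ τ + S₀) - μ (z₂ τ + S₀)) * (∫ a in (0:ℝ)..τ, IH qD y₁ z₁ τ a)
              + μ (z₂ τ + S₀) * ((∫ a in (0:ℝ)..τ, IH qD y₁ z₁ τ a)
                - ∫ a in (0:ℝ)..τ, IH qD y₂ z₂ τ a) := by ring
        rw [heq]
        have hA : |(μ (z₁ τ + S₀) - μ (z₂ τ + S₀)) * ∫ a in (0:ℝ)..τ, IH qD y₁ z₁ τ a|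
            ≤ L * Ez * (Cq * (M * W) * δ) := by
          rw [abs_mul]
          have h1 : |μ (z₁ τ + S₀) - μ (z₂ τ + S₀)| ≤ L * Ez := by
            calc |μ (z₁ τ + S₀) - μ (z₂ τ + S₀)| ≤ L * |z₁ τ - z₂ τ| :=
                  hμdiff _ _ (hz1b _) (hz2b _)
              _ ≤ L * Ez := mul_le_mul_of_nonneg_left (hEz _) hL0
          have h2 : |∫ a in (0:ℝ)..τ, IH qD y₁ z₁ τ a| ≤ Cq * (M * W) * δ :=
            hInnerBd y₁ z₁ hy1b hz1b τ hτ0 hτδ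
          exact mul_le_mul h1 h2 (abs_nonneg _) (mul_nonneg hL0 hEz0)
        have hB : |μ (z₂ τ + S₀) * ((∫ a in (0:ℝ)..τ, IH qD y₁ z₁ τ a)
              - ∫ a in (0:ℝ)..τ, IH qD y₂ z₂ τ a)|
            ≤ M * (Cq * (L * W * Ez + M * Ey) * δ) := by
          rw [abs_mul]
          have h2 : |(∫ a in (0:ℝ)..τ, IH qD y₁ z₁ τ a) - ∫ a in (0:ℝ)..τ, IH qD y₂ z₂ τ a|
              ≤ Cq * (L * W * Ez + M * Ey) * δ := by
            rw [← intervalIntegral.integral_sub (hii qD y₁ z₁ hqDc hy₁ hz₁ hz1b τ 0 τ)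
              (hii qD y₂ z₂ hqDc hy₂ hz₂ hz2b τ 0 τ)]
            calc |∫ a in (0:ℝ)..τ, (IH qD y₁ z₁ τ a - IH qD y₂ z₂ τ a)|
                ≤ Cq * (L * W * Ez + M * Ey) * τ := hIntBd _ _ τ hτ0 (fun a _ =>
                  hIHdiffbd qD Cq y₁ z₁ y₂ z₂ Ey Ez hqD0 hqDb hy1b hz1b hy2b hz2b hEy hEz τ a)
              _ ≤ Cq * (L * W * Ez + M * Ey) * δ := mul_le_mul_of_nonneg_left hτδ hDq
          exact mul_le_mul (by rw [abs_of_nonneg (hμM _ (hz2b _)).1]; exact (hμM _ (hz2b _)).2)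
            h2 (abs_nonneg _) hM0
        calc |(μ (z₁ τ + S₀) - μ (z₂ τ + S₀)) * (∫ a in (0:ℝ)..τ, IH qD y₁ z₁ τ a)
              + μ (z₂ τ + S₀) * ((∫ a in (0:ℝ)..τ, IH qD y₁ z₁ τ a)
                - ∫ a in (0:ℝ)..τ, IH qD y₂ z₂ τ a)|
            ≤ |(μ (z₁ τ + S₀) - μ (z₂ τ + S₀)) * ∫ a in (0:ℝ)..τ, IH qD y₁ z₁ τ a|
              + |μ (z₂ τ + S₀) * ((∫ a in (0:ℝ)..τ, IH qD y₁ z₁ τ a)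
                - ∫ a in (0:ℝ)..τ, IH qD y₂ z₂ τ a)| := abs_add_le _ _
          _ ≤ L * Ez * (Cq * (M * W) * δ) + M * (Cq * (L * W * Ez + M * Ey) * δ) :=
              add_le_add hA hB
      calc |∫ τ in (0:ℝ)..t₂, (μ (z₁ τ + S₀) * (∫ a in (0:ℝ)..τ, IH qD y₁ z₁ τ a)
            - μ (z₂ τ + S₀) * ∫ a in (0:ℝ)..τ, IH qD y₂ z₂ τ a)|
          ≤ (L * Ez * (Cq * (M * W) * δ) + M * (Cq * (L * W * Ez + M * Ey) * δ)) * t₂ :=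
            hIntBd _ _ t₂ ht₂.1 hpt
        _ ≤ _ * δ := mul_le_mul_of_nonneg_left ht₂.2 hptnn
    have eT2 : |T2op μ k q β f₀ D S_in S₀ y₁ z₁ t₂ - T2op μ k q β f₀ D S_in S₀ y₂ z₂ t₂|
        ≤ L * (Cq * P) * Ez * δ
          + (L * Ez * (Cq * (M * W) * δ) + M * (Cq * (L * W * Ez + M * Ey) * δ)) * δ := by
      rw [hT2eq y₁ z₁ t₂ ht₂, hT2eq y₂ z₂ t₂ ht₂]
      have heq : ((S_in - S₀) * (1 - bInput D t₂)
            - bInput D t₂ * (∫ τ in (0:ℝ)..t₂, μ (z₁ τ + S₀) * hG τ)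
            - bInput D t₂ * ∫ τ in (0:ℝ)..t₂, μ (z₁ τ + S₀) * ∫ a in (0:ℝ)..τ, IH qD y₁ z₁ τ a)
          - ((S_in - S₀) * (1 - bInput D t₂)
            - bInput D t₂ * (∫ τ in (0:ℝ)..t₂, μ (z₂ τ + S₀) * hG τ)
            - bInput D t₂ * ∫ τ in (0:ℝ)..t₂, μ (z₂ τ + S₀) * ∫ a in (0:ℝ)..τ, IH qD y₂ z₂ τ a)
          = bInput D t₂ * (((∫ τ in (0:ℝ)..t₂, μ (z₂ τ + S₀) * hG τ)
              - ∫ τ in (0:ℝ)..t₂, μ (z₁ τ + S₀) * hG τ)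
            + ((∫ τ in (0:ℝ)..t₂, μ (z₂ τ + S₀) * ∫ a in (0:ℝ)..τ, IH qD y₂ z₂ τ a)
              - ∫ τ in (0:ℝ)..t₂, μ (z₁ τ + S₀) * ∫ a in (0:ℝ)..τ, IH qD y₁ z₁ τ a)) := by
        ring
      rw [heq, abs_mul, abs_of_pos hb.1]
      have h1 : |((∫ τ in (0:ℝ)..t₂, μ (z₂ τ + S₀) * hG τ)
              - ∫ τ in (0:ℝ)..t₂, μ (z₁ τ + S₀) * hG τ)
            + ((∫ τ in (0:ℝ)..t₂, μ (z₂ τ + S₀) * ∫ a in (0:ℝ)..τ, IH qD y₂ z₂ τ a)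
              - ∫ τ in (0:ℝ)..t₂, μ (z₁ τ + S₀) * ∫ a in (0:ℝ)..τ, IH qD y₁ z₁ τ a)|
          ≤ L * (Cq * P) * Ez * δ
            + (L * Ez * (Cq * (M * W) * δ) + M * (Cq * (L * W * Ez + M * Ey) * δ)) * δ := by
        refine le_trans (abs_add_le _ _) (add_le_add ?_ ?_)
        · rw [abs_sub_comm]; exact eJ1
        · rw [abs_sub_comm]
          exact eJ2
      calc bInput D t₂ * |_| ≤ 1 * _ := mul_le_mul hb.2 h1 (abs_nonneg _) one_pos.le
        _ = _ := one_mul _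
    -- final combination
    have hδδ : δ * δ ≤ δ := mul_le_of_le_one_left hδ0.le hδ1
    have hδsplit : δ * (A1 + (A2 + A3 * P)) = δ * A1 + δ * (A2 + A3 * P) := by ring
    have c1 : δ * A1 ≤ 1 / 4 := by
      have hnn : 0 ≤ δ * (A2 + A3 * P) :=
        mul_nonneg hδ0.le (add_nonneg hA20 (mul_nonneg hA30 hP0))
      linarith [hδcontr]
    have c2 : δ * (A2 + A3 * P) ≤ 1 / 4 := by
      have hnn : 0 ≤ δ * A1 := mul_nonneg hδ0.le hA10
      linarith [hδcontr]
    have hkey : Ck * (L * W * Ez + M * Ey) * δ + (L * (Cq * P) * Ez * δ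
          + (L * Ez * (Cq * (M * W) * δ) + M * (Cq * (L * W * Ez + M * Ey) * δ)) * δ)
        ≤ δ * A1 * Ey + δ * (A2 + A3 * P) * Ez := by
      have hδδ2 : ∀ X : ℝ, 0 ≤ X → δ * δ * X ≤ δ * X := fun X hX =>
        mul_le_mul_of_nonneg_right hδδ hX
      have h1 := hδδ2 (L * Ez * (Cq * (M * W))) (mul_nonneg (mul_nonneg hL0 hEz0) hCMW)
      have h2 := hδδ2 (M * (Cq * (L * W * Ez + M * Ey))) (mul_nonneg hM0 hDq)
      have hA1e : δ * A1 * Ey + δ * (A2 + A3 * P) * Ez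
          = Ck * (L * W * Ez + M * Ey) * δ + L * (Cq * P) * Ez * δ
            + δ * (L * Ez * (Cq * (M * W))) + δ * (M * (Cq * (L * W * Ez + M * Ey))) := by
        rw [hA1def, hA2def, hA3def, hWdef]; ring
      linarith [h1, h2, hA1e]
    have hfin1 : δ * A1 * Ey ≤ 1 / 4 * Ey := by
      have := mul_le_mul_of_nonneg_right c1 hEy0
      linarith
    have hfin2 : δ * (A2 + A3 * P) * Ez ≤ 1 / 4 * Ez := by
      have := mul_le_mul_of_nonneg_right c2 hEz0
      linarith
    linarith [eT1, eT2, hkey]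
  -- ## congruence of the operators in the function arguments
  have hT1congr : ∀ y z y' z' : ℝ → ℝ, (∀ s ∈ Icc (0:ℝ) δ, y s = y' s) →
      (∀ s ∈ Icc (0:ℝ) δ, z s = z' s) →
      ∀ t ∈ Icc (0:ℝ) δ, T1op μ k β f₀ S₀ y z t = T1op μ k β f₀ S₀ y' z' t := by
    intro y z y' z' hy hz t ht
    simp only [T1op]
    apply intervalIntegral.integral_congr
    intro a ha
    rw [uIcc_of_le ht.1] at ha
    have hmem : t - a ∈ Icc (0:ℝ) δ := ⟨by linarith [ha.2], by linarith [ha.1, ht.2]⟩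
    dsimp only
    rw [hy _ hmem, hz _ hmem]
  have hT2congr : ∀ y z y' z' : ℝ → ℝ, (∀ s ∈ Icc (0:ℝ) δ, y s = y' s) →
      (∀ s ∈ Icc (0:ℝ) δ, z s = z' s) →
      ∀ t ∈ Icc (0:ℝ) δ,
        T2op μ k q β f₀ D S_in S₀ y z t = T2op μ k q β f₀ D S_in S₀ y' z' t := by
    intro y z y' z' hy hz t ht
    simp only [T2op]
    have e1 : (∫ τ in (0:ℝ)..t, μ (z τ + S₀) * kernelInt q β f₀ τ)
        = ∫ τ in (0:ℝ)..t, μ (z' τ + S₀) * kernelInt q β f₀ τ := by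
      apply intervalIntegral.integral_congr
      intro τ hτ
      rw [uIcc_of_le ht.1] at hτ
      have hmem : τ ∈ Icc (0:ℝ) δ := ⟨hτ.1, hτ.2.trans ht.2⟩
      dsimp only
      rw [hz _ hmem]
    have e2 : (∫ τ in (0:ℝ)..t, μ (z τ + S₀) * ∫ a in (0:ℝ)..τ,
          discounted q β a * μ (z (τ - a) + S₀) * (y (τ - a) + kernelInt k β f₀ (τ - a)))
        = ∫ τ in (0:ℝ)..t, μ (z' τ + S₀) * ∫ a in (0:ℝ)..τ,
          discounted q β a * μ (z' (τ - a) + S₀) * (y' (τ - a) + kernelInt k β f₀ (τ - a)) := by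
      apply intervalIntegral.integral_congr
      intro τ hτ
      rw [uIcc_of_le ht.1] at hτ
      have hmem : τ ∈ Icc (0:ℝ) δ := ⟨hτ.1, hτ.2.trans ht.2⟩
      dsimp only
      rw [hz _ hmem]
      congr 1
      apply intervalIntegral.integral_congr
      intro a ha
      rw [uIcc_of_le hτ.1] at ha
      have hmem2 : τ - a ∈ Icc (0:ℝ) δ := ⟨by linarith [ha.2], by linarith [ha.1, hmem.2]⟩
      dsimp only
      rw [hy _ hmem2, hz _ hmem2]
    rw [e1, e2]
  -- ## membership bounds from MemBR
  have hMem1 : ∀ y z : ℝ → ℝ, MemBR δ R y z →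
      (∀ t ∈ Icc (0:ℝ) δ, |y t| ≤ R) ∧ (∀ t ∈ Icc (0:ℝ) δ, |z t| ≤ R) := by
    intro y z hm
    have h0 : (0:ℝ) ∈ Icc (0:ℝ) δ := ⟨le_rfl, hδ0.le⟩
    constructor
    · intro t ht
      have h1 := hm.2.2 t ht 0 h0
      have h2 := abs_nonneg (z 0)
      linarith
    · intro t ht
      have h1 := hm.2.2 0 h0 t ht
      have h2 := abs_nonneg (y 0)
      linarith
  -- ## extension of continuous maps on [0,δ]
  have hprojmem : ∀ s : ℝ, (projIcc (0:ℝ) δ hδ0.le s : ℝ) ∈ Icc (0:ℝ) δ :=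
    fun s => (projIcc (0:ℝ) δ hδ0.le s).2
  set extF : (ℝ → ℝ) → ℝ → ℝ := fun g s => g (projIcc (0:ℝ) δ hδ0.le s) with hextFdef
  have hextFeq : ∀ g : ℝ → ℝ, ∀ s ∈ Icc (0:ℝ) δ, extF g s = g s := by
    intro g s hs
    rw [hextFdef]
    dsimp only
    rw [projIcc_of_mem hδ0.le hs]
  have hextFc : ∀ g : ℝ → ℝ, ContinuousOn g (Icc 0 δ) → Continuous (extF g) := by
    intro g hg
    rw [hextFdef]
    exact hg.restrict.comp continuous_projIcc
  have hextFbd : ∀ (g : ℝ → ℝ) (C : ℝ), (∀ s ∈ Icc (0:ℝ) δ, |g s| ≤ C) →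
      ∀ s, |extF g s| ≤ C := by
    intro g C hC s
    rw [hextFdef]
    exact hC _ (hprojmem s)
  have hextFdiff : ∀ (g₁ g₂ : ℝ → ℝ) (C : ℝ), (∀ s ∈ Icc (0:ℝ) δ, |g₁ s - g₂ s| ≤ C) →
      ∀ s, |extF g₁ s - extF g₂ s| ≤ C := by
    intro g₁ g₂ C hC s
    rw [hextFdef]
    exact hC _ (hprojmem s)
  constructor
  -- ### the contraction statement
  · refine ⟨1/4, by norm_num, by norm_num, ?_⟩
    intro y₁ z₁ y₂ z₂ hm1 hm2 Ey Ez hEy hEz t₁ ht₁ t₂ ht₂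
    obtain ⟨hy1b, hz1b⟩ := hMem1 y₁ z₁ hm1
    obtain ⟨hy2b, hz2b⟩ := hMem1 y₂ z₂ hm2
    have key := hMaster (extF y₁) (extF z₁) (extF y₂) (extF z₂)
      (hextFc y₁ hm1.1) (hextFc z₁ hm1.2.1) (hextFc y₂ hm2.1) (hextFc z₂ hm2.2.1)
      (hextFbd y₁ R hy1b) (hextFbd z₁ R hz1b) (hextFbd y₂ R hy2b) (hextFbd z₂ R hz2b)
      Ey Ez (hextFdiff y₁ y₂ Ey hEy) (hextFdiff z₁ z₂ Ez hEz) t₁ ht₁ t₂ ht₂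
    rw [hT1congr y₁ z₁ (extF y₁) (extF z₁)
        (fun s hs => (hextFeq y₁ s hs).symm) (fun s hs => (hextFeq z₁ s hs).symm) t₁ ht₁,
      hT1congr y₂ z₂ (extF y₂) (extF z₂)
        (fun s hs => (hextFeq y₂ s hs).symm) (fun s hs => (hextFeq z₂ s hs).symm) t₁ ht₁,
      hT2congr y₁ z₁ (extF y₁) (extF z₁)
        (fun s hs => (hextFeq y₁ s hs).symm) (fun s hs => (hextFeq z₁ s hs).symm) t₂ ht₂,
      hT2congr y₂ z₂ (extF y₂) (extF z₂)
        (fun s hs => (hextFeq y₂ s hs).symm) (fun s hs => (hextFeq z₂ s hs).symm) t₂ ht₂]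
    exact key
  -- ### existence of the fixed point
  · haveI : CompactSpace ↥(Icc (0:ℝ) δ) := isCompact_iff_compactSpace.1 isCompact_Icc
    set Bset : Set (C(↥(Icc (0:ℝ) δ), ℝ) × C(↥(Icc (0:ℝ) δ), ℝ)) :=
      {p | ∀ t₁ t₂ : ↥(Icc (0:ℝ) δ), |p.1 t₁| + |p.2 t₂| ≤ R} with hBdef
    have hBclosed : IsClosed Bset := by
      have heq : Bset = ⋂ (t₁ : ↥(Icc (0:ℝ) δ)) (t₂ : ↥(Icc (0:ℝ) δ)),
          (fun p : C(↥(Icc (0:ℝ) δ), ℝ) × C(↥(Icc (0:ℝ) δ), ℝ) =>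
            |p.1 t₁| + |p.2 t₂|) ⁻¹' (Iic R) := by
        rw [hBdef]
        ext p
        simp only [mem_setOf_eq, mem_iInter, mem_preimage, mem_Iic]
      rw [heq]
      exact isClosed_iInter fun t₁ => isClosed_iInter fun t₂ => IsClosed.preimage
        ((((continuous_eval_const t₁).comp continuous_fst).abs).add
          (((continuous_eval_const t₂).comp continuous_snd).abs)) isClosed_Iic
    haveI hBne : Nonempty ↥Bset := ⟨⟨(0, 0), by
      rw [hBdef]
      intro t₁ t₂
      simp only [mem_setOf_eq, Prod.fst_zero, Prod.snd_zero, ContinuousMap.zero_apply,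
        abs_zero, add_zero]
      exact hR0.le⟩⟩
    haveI : CompleteSpace ↥Bset := hBclosed.completeSpace_coe
    set extC : C(↥(Icc (0:ℝ) δ), ℝ) → ℝ → ℝ := fun g s => g (projIcc (0:ℝ) δ hδ0.le s)
      with hextCdef
    have hextCc : ∀ g, Continuous (extC g) := fun g => g.continuous.comp continuous_projIcc
    have hextCeq : ∀ (g : C(↥(Icc (0:ℝ) δ), ℝ)) (s : ℝ) (hs : s ∈ Icc (0:ℝ) δ),
        extC g s = g ⟨s, hs⟩ := by
      intro g s hs
      rw [hextCdef]
      dsimp only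
      rw [projIcc_of_mem hδ0.le hs]
    have hmemB : ∀ p : ↥Bset, ∀ t₁ t₂ : ↥(Icc (0:ℝ) δ),
        |p.1.1 t₁| + |p.1.2 t₂| ≤ R := fun p => p.2
    have hCbd : ∀ p : ↥Bset, (∀ s, |extC p.1.1 s| ≤ R) ∧ (∀ s, |extC p.1.2 s| ≤ R) := by
      intro p
      constructor
      · intro s
        rw [hextCdef]
        have h1 := hmemB p (projIcc (0:ℝ) δ hδ0.le s) (projIcc (0:ℝ) δ hδ0.le s)
        have h2 := abs_nonneg (p.1.2 (projIcc (0:ℝ) δ hδ0.le s))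
        dsimp only
        linarith
      · intro s
        rw [hextCdef]
        have h1 := hmemB p (projIcc (0:ℝ) δ hδ0.le s) (projIcc (0:ℝ) δ hδ0.le s)
        have h2 := abs_nonneg (p.1.1 (projIcc (0:ℝ) δ hδ0.le s))
        dsimp only
        linarith
    have hPhiEx : ∀ p : ↥Bset, ∃ r : ↥Bset,
        (∀ t : ↥(Icc (0:ℝ) δ), r.1.1 t
          = T1op μ k β f₀ S₀ (extC p.1.1) (extC p.1.2) ↑t)
        ∧ (∀ t : ↥(Icc (0:ℝ) δ), r.1.2 t
          = T2op μ k q β f₀ D S_in S₀ (extC p.1.1) (extC p.1.2) ↑t) := by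
      intro p
      have hyc := hextCc p.1.1
      have hzc := hextCc p.1.2
      obtain ⟨hyb, hzb⟩ := hCbd p
      have hc1 : Continuous fun t : ↥(Icc (0:ℝ) δ) =>
          T1op μ k β f₀ S₀ (extC p.1.1) (extC p.1.2) ↑t := by
        have hpar : Continuous fun t : ℝ => ∫ a in (0:ℝ)..t, IH kD (extC p.1.1)
            (extC p.1.2) t a := hIHparam kD _ _ hkDc hyc hzc hzb
        exact (hpar.comp continuous_subtype_val).congr
          fun t => (hT1eq (extC p.1.1) (extC p.1.2) ↑t t.2).symm
      have hc2 : Continuous fun t : ↥(Icc (0:ℝ) δ) =>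
          T2op μ k q β f₀ D S_in S₀ (extC p.1.1) (extC p.1.2) ↑t := by
        have hb' : Continuous fun t : ↥(Icc (0:ℝ) δ) => bInput D ↑t := hbcont.restrict
        have hJ1 := hJ1c (extC p.1.2) hzc hzb
        have hJ2 := hJ2c (extC p.1.1) (extC p.1.2) hyc hzc hzb
        have hrhs : Continuous fun t : ↥(Icc (0:ℝ) δ) =>
            (S_in - S₀) * (1 - bInput D ↑t)
              - bInput D ↑t * (∫ τ in (0:ℝ)..(t : ℝ), μ (extC p.1.2 τ + S₀) * hG τ)
              - bInput D ↑t * ∫ τ in (0:ℝ)..(t : ℝ), μ (extC p.1.2 τ + S₀)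
                  * ∫ a in (0:ℝ)..τ, IH qD (extC p.1.1) (extC p.1.2) τ a :=
          ((continuous_const.mul (continuous_const.sub hb')).sub
            (hb'.mul (hJ1.comp continuous_subtype_val))).sub
            (hb'.mul (hJ2.comp continuous_subtype_val))
        exact hrhs.congr
          fun t => (hT2eq (extC p.1.1) (extC p.1.2) ↑t t.2).symm
      refine ⟨⟨(⟨_, hc1⟩, ⟨_, hc2⟩), ?_⟩, fun t => rfl, fun t => rfl⟩
      intro t₁ t₂
      exact hSelf (extC p.1.1) (extC p.1.2) hyb hzb ↑t₁ t₁.2 ↑t₂ t₂.2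
    choose Φ hΦ1 hΦ2 using hPhiEx
    have hzero : (0:ℝ) ∈ Icc (0:ℝ) δ := ⟨le_rfl, hδ0.le⟩
    have hlips : ∀ p p' : ↥Bset, dist (Φ p) (Φ p') ≤ (1/2 : ℝ) * dist p p' := by
      intro p p'
      have hd0 : (0 : ℝ) ≤ dist p p' := dist_nonneg
      have hEy : ∀ s, |extC p.1.1 s - extC p'.1.1 s| ≤ dist p p' := by
        intro s
        rw [hextCdef]
        dsimp only
        rw [← Real.dist_eq]
        calc dist (p.1.1 (projIcc (0:ℝ) δ hδ0.le s)) (p'.1.1 (projIcc (0:ℝ) δ hδ0.le s))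
            ≤ dist p.1.1 p'.1.1 := ContinuousMap.dist_apply_le_dist _
          _ ≤ dist p.1 p'.1 := by rw [Prod.dist_eq]; exact le_max_left _ _
          _ = dist p p' := (Subtype.dist_eq p p').symm

      have hEz : ∀ s, |extC p.1.2 s - extC p'.1.2 s| ≤ dist p p' := by
        intro s
        rw [hextCdef]
        dsimp only
        rw [← Real.dist_eq]
        calc dist (p.1.2 (projIcc (0:ℝ) δ hδ0.le s)) (p'.1.2 (projIcc (0:ℝ) δ hδ0.le s))
            ≤ dist p.1.2 p'.1.2 := ContinuousMap.dist_apply_le_dist _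
          _ ≤ dist p.1 p'.1 := by rw [Prod.dist_eq]; exact le_max_right _ _
          _ = dist p p' := (Subtype.dist_eq p p').symm

      have master := hMaster (extC p.1.1) (extC p.1.2) (extC p'.1.1) (extC p'.1.2)
        (hextCc _) (hextCc _) (hextCc _) (hextCc _)
        (hCbd p).1 (hCbd p).2 (hCbd p').1 (hCbd p').2
        (dist p p') (dist p p') hEy hEz
      have hcomp1 : ∀ t : ↥(Icc (0:ℝ) δ),
          dist ((Φ p).1.1 t) ((Φ p').1.1 t) ≤ 1/2 * dist p p' := by
        intro t
        rw [hΦ1 p t, hΦ1 p' t, Real.dist_eq]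
        have h := master ↑t t.2 0 hzero
        have h2 := abs_nonneg (T2op μ k q β f₀ D S_in S₀ (extC p.1.1) (extC p.1.2) 0
          - T2op μ k q β f₀ D S_in S₀ (extC p'.1.1) (extC p'.1.2) 0)
        linarith
      have hcomp2 : ∀ t : ↥(Icc (0:ℝ) δ),
          dist ((Φ p).1.2 t) ((Φ p').1.2 t) ≤ 1/2 * dist p p' := by
        intro t
        rw [hΦ2 p t, hΦ2 p' t, Real.dist_eq]
        have h := master 0 hzero ↑t t.2
        have h2 := abs_nonneg (T1op μ k β f₀ S₀ (extC p.1.1) (extC p.1.2) 0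
          - T1op μ k β f₀ S₀ (extC p'.1.1) (extC p'.1.2) 0)
        linarith
      have hhalf : (0:ℝ) ≤ 1/2 * dist p p' := by linarith
      have hd1 : dist (Φ p).1.1 (Φ p').1.1 ≤ 1/2 * dist p p' :=
        (ContinuousMap.dist_le hhalf).2 hcomp1
      have hd2 : dist (Φ p).1.2 (Φ p').1.2 ≤ 1/2 * dist p p' :=
        (ContinuousMap.dist_le hhalf).2 hcomp2
      rw [Subtype.dist_eq, Prod.dist_eq]
      exact max_le hd1 hd2
    have hcontr : ContractingWith (1/2 : NNReal) Φ := by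
      constructor
      · rw [← NNReal.coe_lt_coe]
        norm_num
      · apply LipschitzWith.of_dist_le_mul
        intro p p'
        have h := hlips p p'
        have hco : ((1/2 : NNReal) : ℝ) = 1/2 := by norm_num
        rw [hco]
        exact h
    set fp := ContractingWith.fixedPoint Φ hcontr with hfpdef
    have hfix : Φ fp = fp := hcontr.fixedPoint_isFixedPt
    refine ⟨extC fp.1.1, extC fp.1.2, ⟨(hextCc _).continuousOn, (hextCc _).continuousOn,
      ?_⟩, ?_⟩
    · intro t₁ ht₁ t₂ ht₂
      rw [hextCeq _ t₁ ht₁, hextCeq _ t₂ ht₂]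
      exact hmemB fp ⟨t₁, ht₁⟩ ⟨t₂, ht₂⟩
    · intro t ht
      constructor
      · have h1 := hΦ1 fp ⟨t, ht⟩
        rw [hfix] at h1
        rw [hextCeq _ t ht]
        exact h1
      · have h1 := hΦ2 fp ⟨t, ht⟩
        rw [hfix] at h1
        rw [hextCeq _ t ht]
        exact h1
end
end

section
/- (Positivity propagation for the renewal integral equation, Fact 5.) Let δ > 0, let μ : [0,∞) → [0,∞) be continuous with μ(s) > 0 for all s > 0, let k, β : [0,∞) → [0,∞) be bounded continuous with ∫₀^∞ k(a) da > 0, let f₀ : [0,∞) → (0,∞) be continuous and Lebesgue integrable, and let S : [0,δ] → (0,∞) be continuous. Suppose w : [0,δ] → ℝ is continuous and satisfies, for all t ∈ [0,δ], w(t) = ∫_t^∞ k(a)·f₀(a−t)·exp(−∫_{a−t}^a β(s)ds) da + ∫₀^t k(a)·exp(−∫₀^a β(s)ds)·μ(S(t−a))·w(t−a) da. Then w(t) > 0 for all t ∈ [0,δ]. -/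
open MeasureTheory Set Filter

/-- **Positivity propagation for the renewal integral equation (Fact 5).** If `w` is
continuous on `[0,δ]` and satisfies the renewal equation
`w(t) = ∫_t^∞ k(a) f₀(a−t) exp(−∫_{a−t}^a β) da + ∫₀^t k(a) exp(−∫₀^a β) μ(S(t−a)) w(t−a) da`,
with `f₀ > 0` continuous integrable, `S > 0` continuous, `μ ≥ 0` continuous with
`μ(s) > 0` for `s > 0`, and `k, β ≥ 0` bounded continuous with `∫₀^∞ k > 0`, then
`w(t) > 0` for all `t ∈ [0,δ]`. -/
theorem positivity_propagation_renewal
    (δ : ℝ) (hδ : 0 < δ)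
    (μ : ℝ → ℝ) (hμc : ContinuousOn μ (Ici 0)) (hμn : ∀ s, 0 ≤ s → 0 ≤ μ s)
    (hμp : ∀ s, 0 < s → 0 < μ s)
    (k β : ℝ → ℝ)
    (hkc : ContinuousOn k (Ici 0)) (hkn : ∀ a, 0 ≤ a → 0 ≤ k a)
    (hkb : ∃ C, ∀ a, 0 ≤ a → k a ≤ C)
    (hβc : ContinuousOn β (Ici 0)) (hβn : ∀ a, 0 ≤ a → 0 ≤ β a)
    (hβb : ∃ C, ∀ a, 0 ≤ a → β a ≤ C)
    (hkint : 0 < ∫⁻ a in Ioi (0:ℝ), ENNReal.ofReal (k a))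
    (f₀ : ℝ → ℝ) (hf₀c : ContinuousOn f₀ (Ici 0)) (hf₀p : ∀ a, 0 ≤ a → 0 < f₀ a)
    (hf₀i : IntegrableOn f₀ (Ioi 0))
    (S : ℝ → ℝ) (hSc : ContinuousOn S (Icc 0 δ)) (hSp : ∀ t ∈ Icc 0 δ, 0 < S t)
    (w : ℝ → ℝ) (hwc : ContinuousOn w (Icc 0 δ))
    (hw : ∀ t ∈ Icc 0 δ,
      w t = (∫ a in Ioi t, k a * f₀ (a - t) * Real.exp (-(∫ s in (a - t)..a, β s)))
        + ∫ a in (0:ℝ)..t,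
            k a * Real.exp (-(∫ s in (0:ℝ)..a, β s)) * μ (S (t - a)) * w (t - a)) :
    ∀ t ∈ Icc 0 δ, 0 < w t := by
  obtain ⟨C, hC⟩ := hkb
  have hC0 : 0 ≤ C := le_trans (hkn 0 le_rfl) (hC 0 le_rfl)
  -- global continuous version of β and its primitive
  set βt : ℝ → ℝ := fun s => β (max s 0) with hβtdef
  have hβtc : Continuous βt :=
    hβc.comp_continuous (continuous_id.max continuous_const) (fun x => le_max_right x 0)
  set B : ℝ → ℝ := fun x => ∫ s in (0:ℝ)..x, βt s with hBdef
  have hBc : Continuous B :=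
    intervalIntegral.continuous_primitive (fun a b => hβtc.intervalIntegrable a b) 0
  have hBeq : ∀ u v : ℝ, 0 ≤ u → u ≤ v → (∫ s in u..v, β s) = B v - B u := by
    intro u v hu huv
    have h1 : (∫ s in u..v, β s) = ∫ s in u..v, βt s := by
      refine intervalIntegral.integral_congr fun s hs => ?_
      rw [uIcc_of_le huv] at hs
      simp only [hβtdef]
      rw [max_eq_left (le_trans hu hs.1)]
    have h2 : (∫ s in (0:ℝ)..u, βt s) + (∫ s in u..v, βt s) = ∫ s in (0:ℝ)..v, βt s :=
      intervalIntegral.integral_add_adjacent_intervals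
        (hβtc.intervalIntegrable 0 u) (hβtc.intervalIntegrable u v)
    simp only [hBdef]
    rw [h1]
    linarith [h2]
  have hβint_nonneg : ∀ u v : ℝ, 0 ≤ u → u ≤ v → 0 ≤ ∫ s in u..v, β s := by
    intro u v hu huv
    exact intervalIntegral.integral_nonneg huv (fun s hs => hβn s (le_trans hu hs.1))
  -- translated integrability of f₀
  have hf₀T : ∀ t : ℝ, 0 ≤ t → IntegrableOn (fun a => f₀ (a - t)) (Ioi t) := by
    intro t ht
    have h1 : Integrable ((Ioi (0:ℝ)).indicator f₀) :=
      (integrable_indicator_iff measurableSet_Ioi).2 hf₀i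
    have h2 := h1.comp_sub_right t
    have h3 : (fun a => (Ioi (0:ℝ)).indicator f₀ (a - t))
        = (Ioi t).indicator (fun a => f₀ (a - t)) := by
      ext a
      by_cases h : a ∈ Ioi t
      · rw [indicator_of_mem h]
        exact indicator_of_mem (by simp only [mem_Ioi] at h ⊢; linarith) _
      · rw [indicator_of_notMem (by simp only [mem_Ioi] at h ⊢; linarith),
          indicator_of_notMem h]
    rw [h3] at h2
    exact (integrable_indicator_iff measurableSet_Ioi).1 h2
  -- properties of the first integrand
  have hIfacts : ∀ t : ℝ, t ∈ Icc 0 δ →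
      ContinuousOn (fun a => k a * f₀ (a - t) * Real.exp (-(∫ s in (a - t)..a, β s))) (Ici t)
      ∧ IntegrableOn (fun a => k a * f₀ (a - t) * Real.exp (-(∫ s in (a - t)..a, β s))) (Ioi t) := by
    intro t ht
    set g : ℝ → ℝ := fun a => k a * f₀ (a - t) * Real.exp (-(∫ s in (a - t)..a, β s)) with hgdef
    have hsub : ∀ a ∈ Ici t, (0:ℝ) ≤ a - t := fun a ha => sub_nonneg.2 ha
    have hgc : ContinuousOn g (Ici t) := by
      have hk' : ContinuousOn k (Ici t) := hkc.mono (Ici_subset_Ici.2 ht.1)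
      have hf' : ContinuousOn (fun a => f₀ (a - t)) (Ici t) :=
        hf₀c.comp ((continuous_id.sub continuous_const).continuousOn) hsub
      have hexp : ContinuousOn (fun a => Real.exp (-(∫ s in (a - t)..a, β s))) (Ici t) := by
        have hcont : Continuous (fun a => Real.exp (-(B a - B (a - t)))) := by
          exact (Real.continuous_exp.comp
            ((hBc.sub (hBc.comp (continuous_id.sub continuous_const))).neg))
        refine hcont.continuousOn.congr fun a ha => ?_
        rw [hBeq (a - t) a (hsub a ha) (by linarith [ht.1])]
      exact (hk'.mul hf').mul hexp
    have hgm : AEStronglyMeasurable g (volume.restrict (Ioi t)) :=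
      (hgc.mono Ioi_subset_Ici_self).aestronglyMeasurable measurableSet_Ioi
    have hgnn : ∀ a ∈ Ioi t, 0 ≤ g a := by
      intro a ha
      have ha' : t < a := ha
      have h1 : 0 ≤ k a := hkn a (le_trans ht.1 ha'.le)
      have h2 : 0 ≤ f₀ (a - t) := (hf₀p _ (by linarith)).le
      positivity
    have hbound : ∀ᵐ a ∂(volume.restrict (Ioi t)), ‖g a‖ ≤ C * f₀ (a - t) := by
      rw [ae_restrict_iff' measurableSet_Ioi]
      refine Eventually.of_forall fun a ha => ?_
      have ha' : t < a := ha
      rw [Real.norm_of_nonneg (hgnn a ha)]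
      have h1 : Real.exp (-(∫ s in (a - t)..a, β s)) ≤ 1 := by
        rw [Real.exp_le_one_iff]
        have := hβint_nonneg (a - t) a (by linarith) (by linarith [ht.1])
        linarith
      have h2 : 0 < f₀ (a - t) := hf₀p _ (by linarith)
      have h3 : k a ≤ C := hC a (by linarith [ht.1])
      have h4 : 0 ≤ k a := hkn a (by linarith [ht.1])
      have h5 : 0 < Real.exp (-(∫ s in (a - t)..a, β s)) := Real.exp_pos _
      calc k a * f₀ (a - t) * Real.exp (-(∫ s in (a - t)..a, β s))
          ≤ k a * f₀ (a - t) * 1 := mul_le_mul_of_nonneg_left h1 (mul_nonneg h4 h2.le)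
        _ = k a * f₀ (a - t) := by ring
        _ ≤ C * f₀ (a - t) := mul_le_mul_of_nonneg_right h3 h2.le
    exact ⟨hgc, Integrable.mono' ((hf₀T t ht.1).const_mul C) hgm hbound⟩
  -- the set where k is positive has positive measure
  have hK : 0 < volume ({a | 0 < k a} ∩ Ioi 0) := by
    by_contra h
    push_neg at h
    have h0 : volume ({a | 0 < k a} ∩ Ioi 0) = 0 := le_antisymm (by simpa using h) zero_le
    have hae : (fun a => ENNReal.ofReal (k a)) =ᵐ[volume.restrict (Ioi 0)] 0 := by
      rw [Filter.EventuallyEq, ae_iff, Measure.restrict_apply' measurableSet_Ioi]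
      refine measure_mono_null (fun a ha => ?_) h0
      simp only [mem_inter_iff, mem_setOf_eq, Pi.zero_apply, ENNReal.ofReal_eq_zero,
        not_le] at ha ⊢
      exact ha.imp_left id
    rw [lintegral_congr_ae hae] at hkint
    simp at hkint
  -- main contradiction argument
  by_contra hcon
  push_neg at hcon
  obtain ⟨t₀, ht₀, hwt₀⟩ := hcon
  set P : Set ℝ := {t | t ∈ Icc 0 δ ∧ w t ≤ 0} with hPdef
  have hPne : P.Nonempty := ⟨t₀, ht₀, hwt₀⟩
  have hPclosed : IsClosed P := by
    have : P = Icc 0 δ ∩ w ⁻¹' Iic 0 := by ext x; simp [hPdef, and_comm]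
    rw [this]
    exact hwc.preimage_isClosed_of_isClosed isClosed_Icc isClosed_Iic
  have hPcompact : IsCompact P :=
    isCompact_Icc.of_isClosed_subset hPclosed (fun x hx => hx.1)
  set T := sInf P with hTdef
  have hTmem' : T ∈ P := hPcompact.sInf_mem hPne
  have hTmem : T ∈ Icc 0 δ := hTmem'.1
  have hwT : w T ≤ 0 := hTmem'.2
  have hmin : ∀ u, 0 ≤ u → u < T → 0 < w u := by
    intro u hu huT
    by_contra h
    push_neg at h
    have hu' : u ∈ P := ⟨⟨hu, le_trans huT.le hTmem.2⟩, h⟩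
    exact absurd (csInf_le hPcompact.bddBelow hu') (not_le.2 huT)
  -- split the positivity set of k
  have hsplit : 0 < volume ({a | 0 < k a} ∩ Ioc 0 T) ∨ 0 < volume ({a | 0 < k a} ∩ Ioi T) := by
    by_contra h
    push_neg at h
    have h1 : volume ({a | 0 < k a} ∩ Ioc 0 T) = 0 :=
      le_antisymm (by simpa using h.1) zero_le
    have h2 : volume ({a | 0 < k a} ∩ Ioi T) = 0 :=
      le_antisymm (by simpa using h.2) zero_le
    have hsub : {a | 0 < k a} ∩ Ioi 0
        ⊆ ({a | 0 < k a} ∩ Ioc 0 T) ∪ ({a | 0 < k a} ∩ Ioi T) := by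
      intro a ha
      rcases le_or_gt a T with hle | hlt
      · exact Or.inl ⟨ha.1, ha.2, hle⟩
      · exact Or.inr ⟨ha.1, hlt⟩
    have := le_trans (measure_mono hsub) (measure_union_le (μ := (volume : Measure ℝ)) _ _)
    rw [h1, h2, add_zero] at this
    exact absurd (le_antisymm this zero_le) (ne_of_gt hK)
  -- facts about the two integrals at T
  obtain ⟨hgc, hgint⟩ := hIfacts T hTmem
  set g : ℝ → ℝ := fun a => k a * f₀ (a - T) * Real.exp (-(∫ s in (a - T)..a, β s)) with hgdef
  have hgnn : ∀ a ∈ Ioi T, 0 ≤ g a := by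
    intro a ha
    have ha' : T < a := ha
    have h1 : 0 ≤ k a := hkn a (le_trans hTmem.1 ha'.le)
    have h2 : 0 ≤ f₀ (a - T) := (hf₀p _ (by linarith)).le
    simp only [hgdef]
    positivity
  have hInn : 0 ≤ ∫ a in Ioi T, g a := setIntegral_nonneg measurableSet_Ioi hgnn
  set q : ℝ → ℝ := fun a =>
    k a * Real.exp (-(∫ s in (0:ℝ)..a, β s)) * μ (S (T - a)) * w (T - a) with hqdef
  have hTsubmap : MapsTo (fun a => T - a) (Icc 0 T) (Icc 0 δ) := by
    intro a ha
    show T - a ∈ Icc 0 δ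
    exact ⟨by linarith [ha.2], by linarith [ha.1, hTmem.2]⟩
  have hqc : ContinuousOn q (Icc 0 T) := by
    have hk' : ContinuousOn k (Icc 0 T) := hkc.mono (fun x hx => hx.1)
    have hexp : ContinuousOn (fun a => Real.exp (-(∫ s in (0:ℝ)..a, β s))) (Icc 0 T) := by
      have hcont : Continuous (fun a => Real.exp (-(B a - B 0))) :=
        Real.continuous_exp.comp ((hBc.sub continuous_const).neg)
      refine hcont.continuousOn.congr fun a ha => ?_
      rw [hBeq 0 a le_rfl ha.1]
    have hTsc : ContinuousOn (fun a : ℝ => T - a) (Icc 0 T) :=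
      (continuous_const.sub continuous_id).continuousOn
    have hμS : ContinuousOn (fun a => μ (S (T - a))) (Icc 0 T) := by
      refine hμc.comp ((hSc.comp hTsc hTsubmap)) ?_
      intro a ha
      exact (hSp _ (hTsubmap ha)).le
    have hwS : ContinuousOn (fun a => w (T - a)) (Icc 0 T) := hwc.comp hTsc hTsubmap
    exact ((hk'.mul hexp).mul hμS).mul hwS
  have hqint : IntegrableOn q (Ioc 0 T) :=
    (hqc.integrableOn_Icc).mono_set Ioc_subset_Icc_self
  have hqnn : ∀ a ∈ Ioc 0 T, 0 ≤ q a := by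
    intro a ha
    have h1 : 0 ≤ k a := hkn a ha.1.le
    have hTa : T - a ∈ Icc 0 δ := hTsubmap ⟨ha.1.le, ha.2⟩
    have h2 : 0 ≤ μ (S (T - a)) := hμn _ (hSp _ hTa).le
    have h3 : 0 ≤ w (T - a) := (hmin (T - a) hTa.1 (by linarith [ha.1])).le
    simp only [hqdef]
    positivity
  have hJeq : (∫ a in (0:ℝ)..T, q a) = ∫ a in Ioc 0 T, q a :=
    intervalIntegral.integral_of_le hTmem.1
  have hJnn : 0 ≤ ∫ a in Ioc 0 T, q a := setIntegral_nonneg measurableSet_Ioc hqnn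
  have hwTeq : w T = (∫ a in Ioi T, g a) + ∫ a in (0:ℝ)..T, q a := hw T hTmem
  rw [hJeq] at hwTeq
  rcases hsplit with hpos | hpos
  · -- second integral positive
    have hTpos : 0 < T := by
      by_contra h
      push_neg at h
      have : ({a | 0 < k a} ∩ Ioc 0 T) = ∅ := by
        rw [eq_empty_iff_forall_notMem]
        intro a ha
        exact absurd (lt_of_lt_of_le ha.2.1 ha.2.2) (not_lt.2 h)
      rw [this] at hpos
      simp at hpos
    have hJpos : 0 < ∫ a in Ioc 0 T, q a := by
      rw [setIntegral_pos_iff_support_of_nonneg_ae ?_ hqint]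
      · refine lt_of_lt_of_le hpos (measure_mono ?_)
        intro a ha
        have haI : a ∈ Ioc 0 T := ha.2
        have hTa : T - a ∈ Icc 0 δ := hTsubmap ⟨haI.1.le, haI.2⟩
        have h2 : 0 < μ (S (T - a)) := hμp _ (hSp _ hTa)
        have h3 : 0 < w (T - a) := hmin (T - a) hTa.1 (by linarith [haI.1])
        have h4 : 0 < Real.exp (-(∫ s in (0:ℝ)..a, β s)) := Real.exp_pos _
        have h1 : 0 < k a := ha.1
        refine ⟨?_, haI⟩
        simp only [Function.mem_support, hqdef]
        positivity
      · exact (ae_restrict_iff' measurableSet_Ioc).mpr (Eventually.of_forall hqnn)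
    linarith
  · -- first integral positive
    have hIpos : 0 < ∫ a in Ioi T, g a := by
      rw [setIntegral_pos_iff_support_of_nonneg_ae ?_ hgint]
      · refine lt_of_lt_of_le hpos (measure_mono ?_)
        intro a ha
        have haI : a ∈ Ioi T := ha.2
        have ha' : T < a := haI
        have h1 : 0 < k a := ha.1
        have h2 : 0 < f₀ (a - T) := hf₀p _ (by linarith [hTmem.1])
        have h4 : 0 < Real.exp (-(∫ s in (a - T)..a, β s)) := Real.exp_pos _
        refine ⟨?_, haI⟩
        simp only [Function.mem_support, hgdef]
        positivity
      · exact (ae_restrict_iff' measurableSet_Ioi).mpr (Eventually.of_forall hgnn)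
    linarith
end

section
/- (L¹-continuity in time of the characteristics formula, Fact 8.) Let T > 0, x ∈ C⁰([0,T]), D ∈ L^∞([0,T];[0,∞)), f₀ ∈ C⁰([0,∞)) ∩ L¹([0,∞)), and let β : [0,∞) → [0,∞) be bounded continuous, with f₀(0) = x(0). Define f(t,a) = f₀(a−t)·exp(−∫₀^t D(s)ds − ∫_{a−t}^a β(s)ds) for 0 ≤ t ≤ a and f(t,a) = x(t−a)·exp(−∫_{t−a}^t D(s)ds − ∫₀^a β(s)ds) for t > a ≥ 0. Then the map t ↦ f[t] = f(t,·) is continuous from [0,T] into L¹([0,∞)), i.e., for every t₀ ∈ [0,T] one has ∫₀^∞ |f(t,a) − f(t₀,a)| da → 0 as t → t₀ in [0,T]. -/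
/-!
Extending `f₀` by zero to `F`, the densities satisfy `|f(t, a)| ≤ |F(a - t)| + C·1_{(0,T]}(a)`,
so `|f(t, ·) - f(t₀, ·)| ≤ |F(· - t) - F(· - t₀)| + H` with `H` integrable and independent
of `t`. The first term tends to `0` in `L¹` by continuity of translation in `L¹`, and
`f(t, a) → f(t₀, a)` for every age `a ≠ t₀`, because away from the characteristic `a = t`
the formula is locally one of two expressions continuous in `t`. Dominated convergence
applied to `min(|f(t, ·) - f(t₀, ·)|, H)` then gives the claim.
-/

open MeasureTheory Set Filter Topology
open scoped ENNReal

theorem MeasureTheory.Integrable.tendsto_integral_norm_comp_sub_sub {E : Type*}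
    [NormedAddCommGroup E] {F : ℝ → E} (hF : Integrable F) (t₀ : ℝ) :
    Tendsto (fun t => ∫ a, ‖F (a - t) - F (a - t₀)‖) (𝓝 t₀) (𝓝 0) := by
  have : Fact ((1 : ℝ≥0∞) ≠ ∞) := ⟨ENNReal.one_ne_top⟩
  have hcont : Continuous fun t : ℝ => DomAddAct.mk (-t) +ᵥ hF.toL1 F :=
    (DomAddAct.continuous_mk.comp continuous_neg).vadd continuous_const
  refine (tendsto_iff_dist_tendsto_zero.1 (hcont.tendsto t₀)).congr fun t => ?_
  rw [L1.dist_eq_integral_dist]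
  refine integral_congr_ae ?_
  have hshift (s : ℝ) : (fun a => hF.toL1 F (-s + a)) =ᵐ[volume] fun a => F (a - s) := by
    simpa [Function.comp_def, sub_eq_neg_add] using
      hF.coeFn_toL1.comp_tendsto (quasiMeasurePreserving_add_left volume (-s)).tendsto_ae
  filter_upwards [DomAddAct.vadd_Lp_ae_eq (DomAddAct.mk (-t)) (hF.toL1 F),
    DomAddAct.vadd_Lp_ae_eq (DomAddAct.mk (-t₀)) (hF.toL1 F), hshift t, hshift t₀]
    with a h h₀ hs hs₀
  rw [dist_eq_norm, h, h₀]
  simp only [Equiv.symm_apply_apply, vadd_eq_add, hs, hs₀]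

theorem MeasureTheory.Integrable.tendsto_setIntegral_norm_comp_sub_sub {E : Type*}
    [NormedAddCommGroup E] {F : ℝ → E} (hF : Integrable F) (s : Set ℝ) (t₀ : ℝ) :
    Tendsto (fun t => ∫ a in s, ‖F (a - t) - F (a - t₀)‖) (𝓝 t₀) (𝓝 0) :=
  squeeze_zero (fun _ => setIntegral_nonneg_of_ae (ae_of_all _ fun _ => norm_nonneg _))
    (fun t => setIntegral_le_integral ((hF.comp_sub_right t).sub (hF.comp_sub_right t₀)).norm
      (ae_of_all _ fun _ => norm_nonneg _))
    (hF.tendsto_integral_norm_comp_sub_sub t₀)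

theorem tendsto_integral_norm_of_norm_le_add {α ι E : Type*} [MeasurableSpace α] {μ : Measure α}
    {l : Filter ι} [l.IsCountablyGenerated] [NormedAddCommGroup E]
    {g : ι → α → E} {h : ι → α → ℝ} {H : α → ℝ}
    (hg : ∀ᶠ i in l, AEStronglyMeasurable (g i) μ) (hh_nonneg : ∀ᶠ i in l, 0 ≤ᵐ[μ] h i)
    (hh_int : ∀ᶠ i in l, Integrable (h i) μ) (hh : Tendsto (fun i => ∫ a, h i a ∂μ) l (𝓝 0))
    (hH : Integrable H μ) (hle : ∀ᶠ i in l, ∀ᵐ a ∂μ, ‖g i a‖ ≤ h i a + H a)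
    (hlim : ∀ᵐ a ∂μ, Tendsto (fun i => g i a) l (𝓝 0)) :
    Tendsto (fun i => ∫ a, ‖g i a‖ ∂μ) l (𝓝 0) := by
  -- `min ‖g i‖ ‖H‖` is dominated by a fixed function, and `h i` absorbs the rest of `‖g i‖`.
  set r : ι → α → ℝ := fun i a => min ‖g i a‖ ‖H a‖
  have hr_meas : ∀ᶠ i in l, AEStronglyMeasurable (r i) μ := by
    filter_upwards [hg] with i hgi using hgi.norm.inf hH.aestronglyMeasurable.norm
  have hr : Tendsto (fun i => ∫ a, r i a ∂μ) l (𝓝 0) := by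
    have := tendsto_integral_filter_of_dominated_convergence (fun a => ‖H a‖) hr_meas
      (Eventually.of_forall fun i => ae_of_all _ fun a => by
        rw [Real.norm_of_nonneg (le_min (norm_nonneg _) (norm_nonneg _))]
        exact min_le_right _ _)
      hH.norm (hlim.mono fun a ha => by
        simpa [r] using ha.norm.min (tendsto_const_nhds (x := ‖H a‖)))
    simpa using this
  refine squeeze_zero' (Eventually.of_forall fun i => integral_nonneg fun a => norm_nonneg _)
    ?_ (by simpa using hh.add hr)
  filter_upwards [hg, hh_nonneg, hh_int, hr_meas, hle] with i hgi hhi hhi_int hri hlei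
  have hri_int : Integrable (r i) μ := hH.norm.mono' hri (ae_of_all _ fun a => by
    rw [Real.norm_of_nonneg (le_min (norm_nonneg _) (norm_nonneg _))]
    exact min_le_right _ _)
  rw [← integral_add hhi_int hri_int]
  refine integral_mono_of_nonneg (ae_of_all _ fun a => norm_nonneg _) (hhi_int.add hri_int) ?_
  filter_upwards [hhi, hlei] with a hha hlea
  rcases le_total ‖g i a‖ ‖H a‖ with hgH | hHg
  · simp only [r, min_eq_left hgH]
    linarith [show 0 ≤ h i a from hha]
  · simp only [r, min_eq_right hHg]
    linarith [Real.le_norm_self (H a)]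

theorem continuousAt_ite_le_of_ne {α β : Type*} [TopologicalSpace α] [LinearOrder α]
    [OrderTopology α] [TopologicalSpace β] {φ ψ : α → β} {a t₀ : α}
    (hφ : ContinuousAt φ t₀) (hψ : ContinuousAt ψ t₀) (h : t₀ ≠ a) :
    ContinuousAt (fun t => if t ≤ a then φ t else ψ t) t₀ := by
  rcases h.lt_or_gt with h | h
  · exact hφ.congr (by filter_upwards [gt_mem_nhds h] with t ht using (if_pos ht.le).symm)
  · exact hψ.congr (by filter_upwards [lt_mem_nhds h] with t ht using (if_neg ht.not_ge).symm)

theorem Continuous.intervalIntegral_of_intervalIntegrable {X E : Type*} [TopologicalSpace X]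
    [NormedAddCommGroup E] [NormedSpace ℝ E] {g : ℝ → E}
    (hg : ∀ u v, IntervalIntegrable g volume u v) {u v : X → ℝ} (hu : Continuous u)
    (hv : Continuous v) : Continuous fun y => ∫ s in u y..v y, g s := by
  have h0 := intervalIntegral.continuous_primitive hg 0
  refine ((h0.comp hv).sub (h0.comp hu)).congr fun y => ?_
  exact intervalIntegral.integral_interval_sub_left (hg 0 _) (hg 0 _)

theorem abs_mul_exp_neg_sub_le (c : ℝ) {I J : ℝ} (hI : 0 ≤ I) (hJ : 0 ≤ J) :
    |c * Real.exp (-I - J)| ≤ |c| := by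
  rw [abs_mul, Real.abs_exp]
  exact mul_le_of_le_one_right (abs_nonneg c) (Real.exp_le_one_iff.2 (by linarith))

noncomputable def characteristicSolution (x D f₀ β : ℝ → ℝ) (t a : ℝ) : ℝ :=
  if t ≤ a then
    f₀ (a - t) * Real.exp (-(∫ s in (0:ℝ)..t, D s) - ∫ s in (a - t)..a, β s)
  else
    x (t - a) * Real.exp (-(∫ s in (t - a)..t, D s) - ∫ s in (0:ℝ)..a, β s)

section Characteristics

variable {T : ℝ} {x D f₀ β : ℝ → ℝ} (hT : 0 ≤ T) (hx : ContinuousOn x (Icc 0 T))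
  (hD : IntegrableOn D (Icc 0 T)) (hf₀ : ContinuousOn f₀ (Ici 0)) (hβ : ContinuousOn β (Ici 0))
include hT hx hD hf₀ hβ

theorem exists_continuous_characteristicSolution_eq_ite :
    ∃ φ ψ : ℝ → ℝ → ℝ, Continuous (Function.uncurry φ) ∧ Continuous (Function.uncurry ψ) ∧
      ∀ t ∈ Icc 0 T, ∀ a, 0 ≤ a →
        characteristicSolution x D f₀ β t a = if t ≤ a then φ t a else ψ t a := by
  -- Clipping the data to the region where the formula reads them makes both branches
  -- continuous on the whole plane.
  set D' := (Icc 0 T).indicator D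
  set β' := fun s => β (max s 0)
  have hD' {u v : ℝ × ℝ → ℝ} (hu : Continuous u) (hv : Continuous v) :
      Continuous fun p => ∫ s in u p..v p, D' s :=
    Continuous.intervalIntegral_of_intervalIntegrable (fun _ _ =>
      ((integrable_indicator_iff measurableSet_Icc).2 hD).intervalIntegrable) hu hv
  have hβ' {u v : ℝ × ℝ → ℝ} (hu : Continuous u) (hv : Continuous v) :
      Continuous fun p => ∫ s in u p..v p, β' s :=
    Continuous.intervalIntegral_of_intervalIntegrable
      (hβ.comp_continuous (by fun_prop) fun s => le_max_right s 0).intervalIntegrable hu hv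
  have hf₀' : Continuous fun s => f₀ (max s 0) :=
    hf₀.comp_continuous (by fun_prop) fun s => le_max_right s 0
  have hx' : Continuous fun s => x (max 0 (min s T)) :=
    hx.comp_continuous (by fun_prop) fun s => ⟨le_max_left _ _, max_le hT (min_le_right _ _)⟩
  refine ⟨fun t a => f₀ (max (a - t) 0) *
      Real.exp (-(∫ s in (0:ℝ)..t, D' s) - ∫ s in (a - t)..a, β' s),
    fun t a => x (max 0 (min (t - a) T)) *
      Real.exp (-(∫ s in (t - a)..t, D' s) - ∫ s in (0:ℝ)..a, β' s), ?_, ?_, ?_⟩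
  · exact (hf₀'.comp (continuous_snd.sub continuous_fst)).mul (Real.continuous_exp.comp
      ((hD' continuous_const continuous_fst).neg.sub
        (hβ' (continuous_snd.sub continuous_fst) continuous_snd)))
  · exact (hx'.comp (continuous_fst.sub continuous_snd)).mul (Real.continuous_exp.comp
      ((hD' (continuous_fst.sub continuous_snd) continuous_fst).neg.sub
        (hβ' continuous_const continuous_snd)))
  intro t ht a ha
  have hD_eq : ∀ u ∈ Icc 0 T, ∀ v ∈ Icc 0 T, ∫ s in u..v, D s = ∫ s in u..v, D' s :=
    fun u hu v hv => intervalIntegral.integral_congr fun s hs =>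
      (indicator_of_mem (uIcc_subset_Icc hu hv hs) D).symm
  have hβ_eq : ∀ u, 0 ≤ u → ∀ v, 0 ≤ v → ∫ s in u..v, β s = ∫ s in u..v, β' s :=
    fun u hu v hv => intervalIntegral.integral_congr fun s hs =>
      congrArg β (max_eq_left (le_min hu hv |>.trans hs.1)).symm
  unfold characteristicSolution
  split_ifs with hta <;> beta_reduce
  · rw [max_eq_left (sub_nonneg.2 hta), hD_eq 0 ⟨le_rfl, hT⟩ t ht,
      hβ_eq (a - t) (sub_nonneg.2 hta) a ha]
  · have hta' : t - a ∈ Icc 0 T := ⟨by linarith, by linarith [ht.2]⟩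
    rw [min_eq_left hta'.2, max_eq_right hta'.1, hD_eq (t - a) hta' t ht, hβ_eq 0 le_rfl a ha]

theorem aestronglyMeasurable_characteristicSolution {t : ℝ} (ht : t ∈ Icc 0 T) :
    AEStronglyMeasurable (characteristicSolution x D f₀ β t) (volume.restrict (Ioi 0)) := by
  obtain ⟨φ, ψ, hφ, hψ, hf_eq⟩ := exists_continuous_characteristicSolution_eq_ite hT hx hD hf₀ hβ
  exact (Measurable.ite measurableSet_Ici (hφ.uncurry_left t).measurable
    (hψ.uncurry_left t).measurable).aestronglyMeasurable.congr
    (ae_restrict_of_forall_mem measurableSet_Ioi fun a ha => (hf_eq t ht a ha.le).symm)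

theorem tendsto_characteristicSolution_of_ne {t₀ a : ℝ} (ht₀ : t₀ ∈ Icc 0 T) (ha : 0 < a)
    (hne : a ≠ t₀) :
    Tendsto (fun t => characteristicSolution x D f₀ β t a) (𝓝[Icc 0 T] t₀)
      (𝓝 (characteristicSolution x D f₀ β t₀ a)) := by
  obtain ⟨φ, ψ, hφ, hψ, hf_eq⟩ := exists_continuous_characteristicSolution_eq_ite hT hx hD hf₀ hβ
  rw [hf_eq t₀ ht₀ a ha.le]
  exact ((continuousAt_ite_le_of_ne (hφ.uncurry_right a).continuousAt
    (hψ.uncurry_right a).continuousAt hne.symm).tendsto.mono_left nhdsWithin_le_nhds).congr'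
    (eventually_nhdsWithin_of_forall fun t ht => (hf_eq t ht a ha.le).symm)

end Characteristics

theorem abs_characteristicSolution_le {T C : ℝ} {x D f₀ β : ℝ → ℝ}
    (hx : ∀ s ∈ Icc 0 T, |x s| ≤ C) (hD : ∀ s ∈ Icc 0 T, 0 ≤ D s)
    (hβ : ∀ a, 0 ≤ a → 0 ≤ β a) {t a : ℝ} (ht : t ∈ Icc 0 T) (ha : 0 < a) :
    |characteristicSolution x D f₀ β t a| ≤
      |(Ici 0).indicator f₀ (a - t)| + (Ioc 0 T).indicator (fun _ => C) a := by
  have hD_int : ∀ u v, 0 ≤ u → u ≤ v → v ≤ T → 0 ≤ ∫ s in u..v, D s :=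
    fun u v hu huv hv => intervalIntegral.integral_nonneg huv fun s hs =>
      hD s ⟨hu.trans hs.1, hs.2.trans hv⟩
  have hβ_int : ∀ u v, 0 ≤ u → u ≤ v → 0 ≤ ∫ s in u..v, β s :=
    fun u v hu huv => intervalIntegral.integral_nonneg huv fun s hs => hβ s (hu.trans hs.1)
  unfold characteristicSolution
  split_ifs with hta
  · have hC : 0 ≤ C := (abs_nonneg _).trans (hx t ht)
    rw [indicator_of_mem (mem_Ici.2 (sub_nonneg.2 hta))]
    exact (abs_mul_exp_neg_sub_le _ (hD_int 0 t le_rfl ht.1 ht.2)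
      (hβ_int (a - t) a (sub_nonneg.2 hta) (by linarith [ht.1]))).trans
      (le_add_of_nonneg_right (indicator_nonneg (fun _ _ => hC) a))
  · have hat : a ∈ Ioc 0 T := ⟨ha, by linarith [ht.2]⟩
    rw [indicator_of_notMem (by simpa using hta), indicator_of_mem hat, abs_zero, zero_add]
    exact (abs_mul_exp_neg_sub_le _ (hD_int (t - a) t (by linarith) (by linarith) ht.2)
      (hβ_int 0 a le_rfl ha.le)).trans (hx _ ⟨by linarith, by linarith [ht.2]⟩)

theorem abs_characteristicSolution_sub_le {T C : ℝ} {x D f₀ β : ℝ → ℝ}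
    (hx : ∀ s ∈ Icc 0 T, |x s| ≤ C) (hD : ∀ s ∈ Icc 0 T, 0 ≤ D s)
    (hβ : ∀ a, 0 ≤ a → 0 ≤ β a) {t t₀ a : ℝ} (ht : t ∈ Icc 0 T) (ht₀ : t₀ ∈ Icc 0 T)
    (ha : 0 < a) :
    |characteristicSolution x D f₀ β t a - characteristicSolution x D f₀ β t₀ a| ≤
      |(Ici 0).indicator f₀ (a - t) - (Ici 0).indicator f₀ (a - t₀)| +
        (2 * |(Ici 0).indicator f₀ (a - t₀)| + 2 * (Ioc 0 T).indicator (fun _ => C) a) := by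
  linarith [abs_characteristicSolution_le (f₀ := f₀) hx hD hβ ht ha,
    abs_characteristicSolution_le (f₀ := f₀) hx hD hβ ht₀ ha,
    abs_sub (characteristicSolution x D f₀ β t a) (characteristicSolution x D f₀ β t₀ a),
    abs_sub_abs_le_abs_sub ((Ici 0).indicator f₀ (a - t)) ((Ici 0).indicator f₀ (a - t₀))]

theorem characteristics_formula_L1_continuity_general
    (T : ℝ) (hT : 0 < T)
    (x : ℝ → ℝ) (hx : ContinuousOn x (Icc 0 T))
    (D : ℝ → ℝ) (hDm : Measurable D) (hDn : ∀ t, 0 ≤ D t)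
    (hDb : ∃ C, ∀ t ∈ Icc (0:ℝ) T, D t ≤ C)
    (f₀ : ℝ → ℝ) (hf₀c : ContinuousOn f₀ (Ici 0)) (hf₀i : IntegrableOn f₀ (Ioi 0))
    (β : ℝ → ℝ) (hβc : ContinuousOn β (Ici 0)) (hβn : ∀ a, 0 ≤ a → 0 ≤ β a)
    (f : ℝ → ℝ → ℝ)
    (hf : ∀ t a, f t a =
      if t ≤ a then
        f₀ (a - t) * Real.exp (-(∫ s in (0:ℝ)..t, D s) - ∫ s in (a - t)..a, β s)
      else
        x (t - a) * Real.exp (-(∫ s in (t - a)..t, D s) - ∫ s in (0:ℝ)..a, β s)) :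
    ∀ t₀ ∈ Icc 0 T,
      Tendsto (fun t => ∫ a in Ioi (0:ℝ), |f t a - f t₀ a|)
        (nhdsWithin t₀ (Icc 0 T)) (nhds 0) := by
  intro t₀ ht₀
  obtain rfl : f = characteristicSolution x D f₀ β := funext fun t => funext (hf t)
  set f := characteristicSolution x D f₀ β
  obtain ⟨C, hC⟩ := isCompact_Icc.exists_bound_of_continuousOn hx
  obtain ⟨CD, hCD⟩ := hDb
  have hD : IntegrableOn D (Icc 0 T) := Measure.integrableOn_of_bounded measure_Icc_lt_top.ne
    hDm.aestronglyMeasurable (ae_restrict_of_forall_mem measurableSet_Icc fun s hs => by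
      simpa [abs_of_nonneg (hDn s)] using hCD s hs)
  set F := (Ici (0:ℝ)).indicator f₀
  set G := (Ioc 0 T).indicator fun _ : ℝ => C
  have hF : Integrable F := (integrable_indicator_iff measurableSet_Ici).2
    ((integrableOn_Ici_iff_integrableOn_Ioi (by simp)).2 hf₀i)
  have hG : Integrable G :=
    (integrable_indicator_iff measurableSet_Ioc).2 (integrableOn_const measure_Ioc_lt_top.ne)
  simpa only [Real.norm_eq_abs] using tendsto_integral_norm_of_norm_le_add
    (g := fun t a => f t a - f t₀ a) (h := fun t a => |F (a - t) - F (a - t₀)|)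
    (eventually_nhdsWithin_of_forall fun t ht =>
      (aestronglyMeasurable_characteristicSolution hT.le hx hD hf₀c hβc ht).sub
      (aestronglyMeasurable_characteristicSolution hT.le hx hD hf₀c hβc ht₀))
    (Eventually.of_forall fun t => ae_of_all _ fun a => abs_nonneg _)
    (Eventually.of_forall fun t =>
      ((hF.comp_sub_right t).sub (hF.comp_sub_right t₀)).abs.restrict)
    (by simpa only [Real.norm_eq_abs] using
      (hF.tendsto_setIntegral_norm_comp_sub_sub _ t₀).mono_left nhdsWithin_le_nhds)
    (((hF.comp_sub_right t₀).abs.const_mul 2).add (hG.const_mul 2)).restrict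
    (eventually_nhdsWithin_of_forall fun t ht => ae_restrict_of_forall_mem measurableSet_Ioi
      fun a ha => abs_characteristicSolution_sub_le (fun s hs => by simpa using hC s hs)
        (fun s _ => hDn s) hβn ht ht₀ ha)
    (by
      filter_upwards [ae_restrict_mem measurableSet_Ioi,
        ae_restrict_of_ae (compl_mem_ae_iff.2 (measure_singleton t₀))] with a ha hne
      exact tendsto_sub_nhds_zero_iff.2
        (tendsto_characteristicSolution_of_ne hT.le hx hD hf₀c hβc ht₀ ha hne))

/-- **L¹-continuity in time of the characteristics formula (Fact 8).** With `f` defined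
by the characteristics formula (4.1) from boundary data `x ∈ C⁰([0,T])`, initial data
`f₀ ∈ C⁰([0,∞)) ∩ L¹([0,∞))` (with `f₀(0) = x(0)`), dilution `D ∈ L^∞([0,T];[0,∞))` and
bounded continuous mortality `β ≥ 0`, the map `t ↦ f[t] = f(t,·)` is continuous from
`[0,T]` into `L¹([0,∞))`. -/
theorem characteristics_formula_L1_continuity
    (T : ℝ) (hT : 0 < T)
    (x : ℝ → ℝ) (hx : ContinuousOn x (Icc 0 T))
    (D : ℝ → ℝ) (hDm : Measurable D) (hDn : ∀ t, 0 ≤ D t)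
    (hDb : ∃ C, ∀ t ∈ Icc (0:ℝ) T, D t ≤ C)
    (f₀ : ℝ → ℝ) (hf₀c : ContinuousOn f₀ (Ici 0)) (hf₀i : IntegrableOn f₀ (Ioi 0))
    (β : ℝ → ℝ) (hβc : ContinuousOn β (Ici 0)) (hβn : ∀ a, 0 ≤ a → 0 ≤ β a)
    (hβb : ∃ C, ∀ a, 0 ≤ a → β a ≤ C)
    (hx0 : f₀ 0 = x 0)
    (f : ℝ → ℝ → ℝ)
    (hf : ∀ t a, f t a =
      if t ≤ a then
        f₀ (a - t) * Real.exp (-(∫ s in (0:ℝ)..t, D s) - ∫ s in (a - t)..a, β s)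
      else
        x (t - a) * Real.exp (-(∫ s in (t - a)..t, D s) - ∫ s in (0:ℝ)..a, β s)) :
    ∀ t₀ ∈ Icc 0 T,
      Tendsto (fun t => ∫ a in Ioi (0:ℝ), |f t a - f t₀ a|)
        (nhdsWithin t₀ (Icc 0 T)) (nhds 0) :=
  characteristics_formula_L1_continuity_general T hT x hx D hDm hDn hDb f₀ hf₀c hf₀i β hβc hβn f hf
end
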